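/- arXiv:1508.00124 — 9 statements merged into one kernel-verified Lean document; each statement's English description precedes it below -/
import Mathlib

section
/- For a subset S of a separable metrizable space X, the following are equivalent: (1) S ∩ U is non-meager in X for every non-empty open subset U of X; (2) S is dense in X and S is a Baire space in the subspace topology. -/
/-!
Meagreness of `S ∩ t` in `X` and of `S ∩ t` viewed inside the subspace `S` agree once `S` is
dense: nowhere dense sets of `S` stay nowhere dense in `X`, and a dense open subset of `X` meets
a dense `S` in a dense open subset of `S`. Both conditions then say that the nonempty open sets
`S ∩ U` of `S` are not meagre, which characterises Baire spaces.
-/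

open Set Filter

section

variable {X : Type*} [TopologicalSpace X]

theorem dense_of_forall_isOpen_not_isMeagre
    (h : ∀ U : Set X, IsOpen U → U.Nonempty → ¬ IsMeagre U) {r : Set X}
    (hr : r ∈ residual X) : Dense r := by
  rw [dense_iff_inter_open]
  intro U hU hne
  by_contra hdisj
  have hrc : IsMeagre rᶜ := by rwa [IsMeagre, compl_compl]
  exact h U hU hne (hrc.mono fun x hxU hxr ↦ hdisj ⟨x, hxU, hxr⟩)

theorem baireSpace_of_forall_isOpen_not_isMeagre
    (h : ∀ U : Set X, IsOpen U → U.Nonempty → ¬ IsMeagre U) : BaireSpace X :=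
  ⟨fun _ hopen hdense ↦ dense_of_forall_isOpen_not_isMeagre h
    (countable_iInter_mem.2 fun n ↦ residual_of_dense_open (hopen n) (hdense n))⟩

theorem Dense.preimage_val_of_isOpen {S t : Set X} (hS : Dense S) (ht : Dense t)
    (hto : IsOpen t) : Dense (Subtype.val ⁻¹' t : Set S) := by
  rw [Subtype.dense_iff, Subtype.image_preimage_coe, inter_comm,
    (ht.inter_of_isOpen_left hS hto).closure_eq]
  exact subset_univ _

theorem Dense.tendsto_val_residual {S : Set X} (hS : Dense S) :
    Tendsto ((↑) : S → X) (residual S) (residual X) := by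
  apply le_countableGenerate_iff_of_countableInterFilter.mpr
  rintro t ⟨hto, htd⟩
  exact residual_of_dense_open (hto.preimage continuous_subtype_val)
    (hS.preimage_val_of_isOpen htd hto)

theorem Dense.isMeagre_preimage_val_iff {S : Set X} (hS : Dense S) {t : Set X} :
    IsMeagre (Subtype.val ⁻¹' t : Set S) ↔ IsMeagre (S ∩ t) := by
  refine ⟨fun h ↦ ?_, fun h ↦ ?_⟩
  · simpa only [Subtype.image_preimage_coe] using h.image_val
  · have h' : IsMeagre (Subtype.val ⁻¹' (S ∩ t) : Set S) := hS.tendsto_val_residual h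
    simpa only [preimage_inter, Subtype.coe_preimage_self, univ_inter] using h'

end

theorem nowhere_meager_iff_dense_baire_general {X : Type*} [TopologicalSpace X] (S : Set X) :
    (∀ U : Set X, IsOpen U → U.Nonempty → ¬ IsMeagre (S ∩ U)) ↔
      (Dense S ∧ BaireSpace S) := by
  constructor
  · intro h
    have hS : Dense S := dense_iff_inter_open.2 fun U hU hne ↦ by
      rw [inter_comm]
      exact nonempty_of_not_isMeagre (h U hU hne)
    refine ⟨hS, baireSpace_of_forall_isOpen_not_isMeagre fun V hV ⟨x, hx⟩ ↦ ?_⟩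
    obtain ⟨W, hW, rfl⟩ := isOpen_induced_iff.1 hV
    rw [hS.isMeagre_preimage_val_iff]
    exact h W hW ⟨x, hx⟩
  · rintro ⟨hS, hBaire⟩ U hU hne
    rw [← hS.isMeagre_preimage_val_iff]
    obtain ⟨x, hxU, hxS⟩ := hS.inter_open_nonempty U hU hne
    exact not_isMeagre_of_isOpen (hU.preimage continuous_subtype_val) ⟨⟨x, hxS⟩, hxU⟩

theorem nowhere_meager_iff_dense_baire {X : Type*} [TopologicalSpace X]
    [TopologicalSpace.MetrizableSpace X] [TopologicalSpace.SeparableSpace X] (S : Set X) :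
    (∀ U : Set X, IsOpen U → U.Nonempty → ¬ IsMeagre (S ∩ U)) ↔
      (Dense S ∧ BaireSpace S) :=
  nowhere_meager_iff_dense_baire_general S
end

section
/- Let X be a crowded (non-empty, perfect) Polish space and let 𝓡 be a countable collection of relations on X, where each R ∈ 𝓡 is a meager subset of X^{n_R} for some 1 ≤ n_R < ω. Then there exists a subset F of X homeomorphic to the Cantor space 2^ω such that F is R-free for every R ∈ 𝓡, i.e., for every R ∈ 𝓡 and every injective tuple x : n_R → F, the tuple x is not in R. -/
/-!
Build a Cantor scheme of nonempty open sets with disjoint siblings and vanishing diameters, as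
for the Cantor–Bendixson embedding, while avoiding the relations. Each meagre `R i` is covered by
countably many nowhere dense pieces, enumerated once and for all. When passing to level `m`, every
tuple of distinct cells of that level is made to miss the pieces numbered below `m`: for a fixed
injective choice of cells, the points `z : cells → X` whose restriction to the chosen cells lies
outside the closure of a piece form a dense open set, finitely many of those meet the box of
current cells, and a small box around a common point gives the new cells. Distinct points of the
Cantor set lie in distinct cells from some level on, so an injective tuple of them misses every
piece.
-/

open Set Function Filter Topology Metric CantorScheme PiNat
open scoped ENNReal

theorem Function.Injective.extend_mem_pi {X ι κ : Type*} {q : ι → κ} (hq : Injective q)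
    {u : κ → Set X} {y : ι → X} {z : κ → X} (hy : ∀ j, y j ∈ u (q j)) (hz : z ∈ univ.pi u) :
    extend q y z ∈ univ.pi u := by
  intro a _
  by_cases ha : ∃ j, q j = a
  · obtain ⟨j, rfl⟩ := ha
    rw [hq.extend_apply]
    exact hy j
  · rw [extend_apply' _ _ _ ha]
    exact hz a trivial

section Avoidance

variable {X : Type*} [TopologicalSpace X]

theorem dense_setOf_comp_notMem_closure {ι κ : Type*} [Finite κ] {q : ι → κ}
    (hq : Injective q) {D : Set (ι → X)} (hD : IsNowhereDense D) :
    Dense {z : κ → X | z ∘ q ∉ closure D} := by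
  have : Finite ι := Finite.of_injective q hq
  rw [dense_iff_inter_open]
  rintro W hW ⟨w, hw⟩
  obtain ⟨u, hu, huW⟩ := isOpen_pi_iff'.1 hW w hw
  obtain ⟨y, hyu, hyD⟩ := (interior_eq_empty_iff_dense_compl.1 hD).inter_open_nonempty
    (univ.pi fun j => u (q j)) (isOpen_set_pi finite_univ fun j _ => (hu (q j)).1)
    ⟨w ∘ q, fun j _ => (hu (q j)).2⟩
  refine ⟨extend q y w, huW (hq.extend_mem_pi (fun j => hyu j trivial) fun a _ => (hu a).2), ?_⟩
  rwa [mem_ofPred_eq, extend_comp hq]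

theorem exists_open_subset_forall_injective_notMem {κ τ : Type*} [Finite κ] [Finite τ] {N : τ → ℕ}
    {D : ∀ t, Set (Fin (N t) → X)} (hD : ∀ t, IsNowhereDense (D t)) {U : κ → Set X}
    (hUo : ∀ a, IsOpen (U a)) (hUne : ∀ a, (U a).Nonempty) :
    ∃ V : κ → Set X, (∀ a, IsOpen (V a) ∧ (V a).Nonempty ∧ V a ⊆ U a) ∧
      ∀ t (q : Fin (N t) → κ), Injective q → ∀ y, (∀ j, y j ∈ V (q j)) → y ∉ D t := by
  let G : (Σ t, {q : Fin (N t) → κ // Injective q}) → Set (κ → X) :=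
    fun p => {z | z ∘ p.2.1 ∉ closure (D p.1)}
  have hGo : ∀ p, IsOpen (G p) := fun p =>
    (isClosed_closure.preimage (by fun_prop)).isOpen_compl
  have hG : Dense (⋂ p, G p) := sInter_range G ▸ (finite_range G).dense_sInter
    (forall_mem_range.2 hGo)
    (forall_mem_range.2 fun p => dense_setOf_comp_notMem_closure p.2.2 (hD p.1))
  have hUpi : IsOpen (univ.pi U) := isOpen_set_pi finite_univ fun a _ => hUo a
  obtain ⟨z, hzU, hzG⟩ := hG.inter_open_nonempty _ hUpi
    ⟨fun a => (hUne a).some, fun a _ => (hUne a).some_mem⟩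
  obtain ⟨u, hu, hsub⟩ :=
    isOpen_pi_iff'.1 (hUpi.inter (isOpen_iInter_of_finite hGo)) z ⟨hzU, hzG⟩
  refine ⟨fun a => U a ∩ u a, fun a => ⟨(hUo a).inter (hu a).1, ⟨z a, hzU a trivial, (hu a).2⟩,
    inter_subset_left⟩, fun t q hq y hy hyD => ?_⟩
  have hz' := (hsub (hq.extend_mem_pi (fun j => (hy j).2) fun a _ => (hu a).2)).2
  exact mem_iInter.1 hz' ⟨t, q, hq⟩ (by rw [extend_comp hq]; exact subset_closure hyD)

end Avoidance

theorem IsOpen.exists_pair_disjoint {X : Type*} [TopologicalSpace X] [T2Space X]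
    [PerfectSpace X] {U : Set X} (hU : IsOpen U) (hne : U.Nonempty) :
    ∃ V : Bool → Set X, (∀ b, IsOpen (V b) ∧ (V b).Nonempty ∧ V b ⊆ U) ∧
      Pairwise (Disjoint on V) := by
  obtain ⟨x, hx⟩ := hne
  obtain ⟨y, ⟨-, hyU⟩, hyx⟩ := accPt_iff_nhds.1 (hU.preperfect x hx) univ univ_mem
  obtain ⟨u, v, hu, hv, hyu, hxv, huv⟩ := t2_separation hyx
  refine ⟨fun b => U ∩ cond b u v, ?_, ?_⟩
  · rintro (_ | _)
    exacts [⟨hU.inter hv, ⟨x, hx, hxv⟩, inter_subset_left⟩,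
      ⟨hU.inter hu, ⟨y, hyU, hyu⟩, inter_subset_left⟩]
  · rintro (_ | _) (_ | _) h <;> simp only [ne_eq, not_true_eq_false] at h
    exacts [huv.symm.mono inter_subset_right inter_subset_right,
      huv.mono inter_subset_right inter_subset_right]

theorem IsOpen.exists_closure_subset_ediam_le {X : Type*} [PseudoEMetricSpace X] {U : Set X}
    (hU : IsOpen U) (hne : U.Nonempty) {ε : ℝ≥0∞} (hε : 0 < ε) :
    ∃ V, IsOpen V ∧ V.Nonempty ∧ closure V ⊆ U ∧ ediam V ≤ ε := by
  obtain ⟨x, hx⟩ := hne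
  obtain ⟨δ, hδ, hδU⟩ := nhds_basis_closedEBall.mem_iff.1 (hU.mem_nhds hx)
  set r := min δ (ε / 2)
  have hr : 0 < r := lt_min hδ (ENNReal.half_pos hε.ne')
  refine ⟨eball x r, isOpen_eball, ⟨x, mem_eball_self hr⟩, ?_, ?_⟩
  · exact (isClosed_closedEBall.closure_subset_iff.2 eball_subset_closedEBall).trans
      ((closedEBall_subset_closedEBall (min_le_left _ _)).trans hδU)
  · calc ediam (eball x r) ≤ 2 * r := ediam_eball_le
      _ ≤ 2 * (ε / 2) := by gcongr; exact min_le_right _ _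
      _ = ε := ENNReal.mul_div_cancel two_ne_zero ENNReal.ofNat_ne_top

theorem PiNat.eventually_injective_res {β ι : Type*} [Finite ι] {σ : ι → ℕ → β}
    (hσ : Injective σ) : ∀ᶠ m in atTop, Injective fun j => res (σ j) m := by
  have : ∀ a b, ∀ᶠ m in atTop, res (σ a) m = res (σ b) m → a = b := by
    intro a b
    by_cases hab : a = b
    · exact .of_forall fun _ _ => hab
    obtain ⟨l, hl⟩ := ne_iff.1 (hσ.ne hab)
    filter_upwards [eventually_gt_atTop l] with m hm h
    exact absurd (res_eq_res.1 h hm) hl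
  filter_upwards [eventually_all.2 fun a => eventually_all.2 (this a)] with m hm a b h
  exact hm a b h

section Scheme

variable {X : Type*} [MetricSpace X] {T : Type*} {N : T → ℕ}

/-- Level `m` of the scheme, with cells indexed by binary words of length `m`. The relations are
enumerated by `enc`, and those numbered below `m` are already avoided. At `m = 0` the diameter bound
is `(0 : ℝ≥0∞)⁻¹ = ⊤`. -/
structure IsFreeLevel (D : ∀ t, Set (Fin (N t) → X)) (enc : T → ℕ) (m : ℕ)
    (c : List.Vector Bool m → Set X) : Prop where
  isOpen : ∀ v, IsOpen (c v)
  nonempty : ∀ v, (c v).Nonempty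
  ediam_le : ∀ v, ediam (c v) ≤ (m : ℝ≥0∞)⁻¹
  notMem : ∀ t, enc t < m → ∀ q : Fin (N t) → List.Vector Bool m, Injective q →
    ∀ y, (∀ j, y j ∈ c (q j)) → y ∉ D t

variable {D : ∀ t, Set (Fin (N t) → X)} {enc : T → ℕ}

theorem isFreeLevel_zero [Nonempty X] : IsFreeLevel D enc 0 fun _ => univ :=
  ⟨fun _ => isOpen_univ, fun _ => univ_nonempty, fun _ => by simp,
    fun _ ht => absurd ht (Nat.not_lt_zero _)⟩

theorem IsFreeLevel.exists_succ [PerfectSpace X] (henc : Injective enc)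
    (hD : ∀ t, IsNowhereDense (D t)) {m : ℕ} {c : List.Vector Bool m → Set X}
    (hc : IsFreeLevel D enc m c) :
    ∃ c' : List.Vector Bool (m + 1) → Set X, IsFreeLevel D enc (m + 1) c' ∧
      (∀ a v, closure (c' (a ::ᵥ v)) ⊆ c v) ∧
      ∀ v, Pairwise fun a b => Disjoint (c' (a ::ᵥ v)) (c' (b ::ᵥ v)) := by
  choose P hP hPdisj using fun v => (hc.isOpen v).exists_pair_disjoint (hc.nonempty v)
  choose W hWo hWne hWcl hWdiam using fun w : List.Vector Bool (m + 1) =>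
    (hP w.tail w.head).1.exists_closure_subset_ediam_le (hP w.tail w.head).2.1
      (ε := ((m + 1 : ℕ) : ℝ≥0∞)⁻¹) (by simp)
  have : Finite {t // enc t < m + 1} :=
    Finite.of_injective (fun t => (⟨enc t.1, t.2⟩ : Fin (m + 1)))
      fun t s h => Subtype.ext (henc (Fin.mk.inj_iff.1 h))
  obtain ⟨c', hc', hfree⟩ := exists_open_subset_forall_injective_notMem
    (N := fun t : {t // enc t < m + 1} => N t) (fun t => hD t) hWo hWne
  have hcP : ∀ a v, closure (c' (a ::ᵥ v)) ⊆ P v a := fun a v =>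
    (closure_mono (hc' _).2.2).trans (by simpa using hWcl (a ::ᵥ v))
  refine ⟨c', ⟨fun w => (hc' w).1, fun w => (hc' w).2.1,
    fun w => (ediam_mono (hc' w).2.2).trans (hWdiam w), fun t ht => hfree ⟨t, ht⟩⟩,
    fun a v => (hcP a v).trans (hP v a).2.2, fun v a b hab => ?_⟩
  exact (hPdisj v hab).mono (subset_closure.trans (hcP a v)) (subset_closure.trans (hcP b v))

theorem exists_cantorScheme_forall_notMem [PerfectSpace X] [Nonempty X] (henc : Injective enc)
    (hD : ∀ t, IsNowhereDense (D t)) :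
    ∃ A : List Bool → Set X, ClosureAntitone A ∧ CantorScheme.Disjoint A ∧ VanishingDiam A ∧
      (∀ l, (A l).Nonempty) ∧ ∀ t m, enc t < m → ∀ q : Fin (N t) → List Bool,
        (∀ j, (q j).length = m) → Injective q → ∀ y, (∀ j, y j ∈ A (q j)) → y ∉ D t := by
  choose! next hnext using fun m c (hc : IsFreeLevel D enc m c) => hc.exists_succ henc hD
  let c : ∀ m, List.Vector Bool m → Set X := fun m =>
    Nat.rec (motive := fun m => List.Vector Bool m → Set X) (fun _ => univ) next m
  have hc : ∀ m, IsFreeLevel D enc m (c m) := fun m =>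
    Nat.rec isFreeLevel_zero (fun m h => (hnext m _ h).1) m
  have hlen : ∀ m (l : List Bool) (h : l.length = m), c m ⟨l, h⟩ = c l.length ⟨l, rfl⟩ := by
    rintro _ l rfl
    rfl
  refine ⟨fun l => c l.length ⟨l, rfl⟩, fun l a => (hnext _ _ (hc _)).2.1 a ⟨l, rfl⟩,
    fun l a b hab => (hnext _ _ (hc _)).2.2 ⟨l, rfl⟩ hab, fun x => ?_,
    fun l => (hc _).nonempty _, fun t m hm q hq hinj y hy => ?_⟩
  · refine tendsto_of_tendsto_of_tendsto_of_le_of_le tendsto_const_nhds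
      ENNReal.tendsto_inv_nat_nhds_zero (fun _ => zero_le) fun n => ?_
    simpa only [res_length] using (hc _).ediam_le ⟨res x n, rfl⟩
  · refine (hc m).notMem t hm (fun j => ⟨q j, hq j⟩)
      (fun i j h => hinj (congrArg Subtype.val h)) y fun j => ?_
    rw [hlen]
    exact hy j

theorem exists_nat_bool_injection_forall_notMem [CompleteSpace X] [PerfectSpace X] [Nonempty X]
    [Countable T] (D : ∀ t, Set (Fin (N t) → X)) (hD : ∀ t, IsNowhereDense (D t)) :
    ∃ f : (ℕ → Bool) → X, Continuous f ∧ Injective f ∧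
      ∀ t (σ : Fin (N t) → ℕ → Bool), Injective σ → f ∘ σ ∉ D t := by
  obtain ⟨enc, henc⟩ := Countable.exists_injective_nat T
  obtain ⟨A, hanti, hdisj, hdiam, hne, hfree⟩ := exists_cantorScheme_forall_notMem henc hD
  have hdom : ∀ x, x ∈ (inducedMap A).1 := fun x =>
    (hanti.map_of_vanishingDiam hdiam hne).symm ▸ mem_univ x
  refine ⟨fun x => (inducedMap A).2 ⟨x, hdom x⟩, hdiam.map_continuous.comp (by fun_prop),
    fun x y h => congrArg Subtype.val (hdisj.map_injective h), fun t σ hσ => ?_⟩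
  obtain ⟨m, hm, hres⟩ :=
    ((eventually_gt_atTop (enc t)).and (eventually_injective_res hσ)).exists
  exact hfree t m hm _ (fun j => res_length _ _) hres _ fun j => map_mem ⟨σ j, hdom _⟩ m

end Scheme

theorem kuratowski_free_cantor_general {X : Type*} [TopologicalSpace X] [PolishSpace X] [Nonempty X]
    (hX : Perfect (Set.univ : Set X))
    {ι : Type*} [Countable ι] (n : ι → ℕ)
    (R : ∀ i, Set (Fin (n i) → X)) (hR : ∀ i, IsMeagre (R i)) :
    ∃ F : Set X, Nonempty (F ≃ₜ (ℕ → Bool)) ∧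
      ∀ i, ∀ x : Fin (n i) → X, Function.Injective x → (∀ k, x k ∈ F) → x ∉ R i := by
  let := TopologicalSpace.upgradeIsCompletelyMetrizable X
  have : PerfectSpace X := ⟨hX.acc⟩
  choose S hS hSc hRS using fun i => isMeagre_iff_countable_union_isNowhereDense.1 (hR i)
  have := fun i => (hSc i).to_subtype
  obtain ⟨f, hfc, hfi, hfree⟩ := exists_nat_bool_injection_forall_notMem
    (N := fun p : Σ i, S i => n p.1) (fun p => p.2.1) fun p => hS p.1 _ p.2.2
  refine ⟨range f, ⟨(hfc.isClosedEmbedding hfi).isEmbedding.toHomeomorph.symm⟩,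
    fun i x hx hxF hxR => ?_⟩
  choose σ hσ using hxF
  obtain ⟨s, hs, hxs⟩ := hRS i hxR
  have hfσ : f ∘ σ = x := funext hσ
  exact hfree ⟨i, s, hs⟩ σ (fun a b h => hx (by rw [← hσ a, ← hσ b, h])) (hfσ ▸ hxs)

theorem kuratowski_free_cantor {X : Type*} [TopologicalSpace X] [PolishSpace X] [Nonempty X]
    (hX : Perfect (Set.univ : Set X))
    {ι : Type*} [Countable ι] (n : ι → ℕ) (hn : ∀ i, 1 ≤ n i)
    (R : ∀ i, Set (Fin (n i) → X)) (hR : ∀ i, IsMeagre (R i)) :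
    ∃ F : Set X, Nonempty (F ≃ₜ (ℕ → Bool)) ∧
      ∀ i, ∀ x : Fin (n i) → X, Function.Injective x → (∀ k, x k ∈ F) → x ∉ R i :=
  kuratowski_free_cantor_general hX n R hR
end

section
/- For a subset S of 2^I, where I is a countably infinite set, S is meager if and only if there exist a finite-to-one function φ : I → ω and z ∈ 2^I such that for every x ∈ S, the set {j ∈ ω : x agrees with z on φ⁻¹(j)} is finite. -/
/-!
A meagre set misses a decreasing sequence of dense open sets `U n`. A dense open subset of `2^I`
contains, for every finite `A ⊆ I`, a cylinder fixing only coordinates outside `A` (treat the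
finitely many patterns on `A` one after the other). Choosing such blocks successively outside
what has been used gives a finite-to-one `φ` and one point `z` such that agreeing with `z` on
`φ⁻¹ j` forces membership in `U j`; a point of `S` lies outside some `U n`, so it agrees with `z`
on no block `j ≥ n`. Conversely, the points disagreeing with `z` on every block `j ≥ n` form a
closed set with empty interior, since a basic open set fixes only finitely many coordinates and
so leaves all blocks far enough out free.
-/

open Set

lemma IsMeagre.exists_antitone_isOpen_dense {X : Type*} [TopologicalSpace X] {s : Set X}
    (hs : IsMeagre s) : ∃ U : ℕ → Set X, Antitone U ∧ (∀ n, IsOpen (U n)) ∧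
      (∀ n, Dense (U n)) ∧ s ⊆ ⋃ n, (U n)ᶜ := by
  obtain ⟨S, hSo, hSd, hSc, hS⟩ := mem_residual_iff.1 hs
  obtain ⟨f, hf⟩ := (hSc.insert univ).exists_eq_range (insert_nonempty _ _)
  have hf_mem : ∀ n, f n ∈ insert univ S := fun n => hf ▸ mem_range_self n
  have hfo : ∀ n, IsOpen (f n) := fun n => (hf_mem n).elim (· ▸ isOpen_univ) (hSo _)
  have hfd : ∀ n, Dense (f n) := fun n => (hf_mem n).elim (· ▸ dense_univ) (hSd _)
  refine ⟨fun n => ⋂₀ (f '' Iic n),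
    fun m n hmn => sInter_subset_sInter (image_mono (Iic_subset_Iic.2 hmn)),
    fun n => ((finite_Iic n).image f).isOpen_sInter (forall_mem_image.2 fun k _ => hfo k),
    fun n => ((finite_Iic n).image f).dense_sInter (forall_mem_image.2 fun k _ => hfo k)
      (forall_mem_image.2 fun k _ => hfd k), fun x hx => ?_⟩
  obtain ⟨t, htS, hxt⟩ : ∃ t ∈ S, x ∉ t := by
    by_contra! h
    exact hS h hx
  obtain ⟨n, rfl⟩ : t ∈ range f := hf ▸ mem_insert_of_mem _ htS
  exact mem_iUnion.2 ⟨n, fun hxU => hxt (mem_sInter.1 hxU _ (mem_image_of_mem f self_mem_Iic))⟩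

section Cylinders

variable {ι α : Type*} [TopologicalSpace α]

lemma IsOpen.exists_finset_setOf_eqOn_subset {U : Set (ι → α)} (hU : IsOpen U) {y : ι → α}
    (hy : y ∈ U) : ∃ J : Finset ι, {x | EqOn x y J} ⊆ U := by
  obtain ⟨J, u, hu, hJU⟩ := isOpen_pi_iff.1 hU y hy
  exact ⟨J, fun x hx => hJU fun i hi => (hx hi).symm ▸ (hu i hi).2⟩

variable [DiscreteTopology α]

lemma isOpen_setOf_eqOn {s : Set ι} (hs : s.Finite) (y : ι → α) :
    IsOpen {x : ι → α | EqOn x y s} :=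
  isOpen_set_pi hs fun i _ => isOpen_discrete {y i}

/-- Inductively over the finitely many patterns `τ` on `A`, shrink into `U` the cylinder of
points showing `τ` on `A`, each time by fixing coordinates outside `A` only. -/
lemma Dense.exists_disjoint_setOf_restrict_mem_eqOn_subset [Nonempty α] {U : Set (ι → α)}
    (hUd : Dense U) (hUo : IsOpen U) (A : Finset ι) {T : Set (A → α)} (hT : T.Finite) :
    ∃ B : Finset ι, Disjoint A B ∧
      ∃ w : ι → α, {x | (A.restrict x : A → α) ∈ T ∧ EqOn x w B} ⊆ U := by
  classical
  induction T, hT using Set.Finite.induction_on with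
  | empty =>
    exact ⟨∅, Finset.disjoint_empty_right A, Classical.arbitrary _, fun x hx => hx.1.elim⟩
  | @insert τ T _ _ ih =>
    obtain ⟨B, hAB, w, hw⟩ := ih
    let y₀ : ι → α := fun i => if h : i ∈ A then τ ⟨i, h⟩ else w i
    obtain ⟨y, hy₀, hyU⟩ := hUd.inter_open_nonempty {x | EqOn x y₀ ↑(A ∪ B)}
      (isOpen_setOf_eqOn (A ∪ B).finite_toSet y₀) ⟨y₀, eqOn_refl _ _⟩
    obtain ⟨J, hJ⟩ := hUo.exists_finset_setOf_eqOn_subset hyU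
    refine ⟨B ∪ (J \ A), Finset.disjoint_union_right.2 ⟨hAB, Finset.disjoint_sdiff⟩, y, ?_⟩
    rintro x ⟨hxτ | hxT, hxy⟩
    · refine hJ fun i hi => ?_
      by_cases hiA : i ∈ A
      · rw [hy₀ (Finset.mem_union_left B hiA)]
        simpa [y₀, hiA] using congrFun hxτ ⟨i, hiA⟩
      · exact hxy (Finset.mem_union_right B (Finset.mem_sdiff.2 ⟨hi, hiA⟩))
    · refine hw ⟨hxT, fun i hi => ?_⟩
      have hiA : i ∉ A := Finset.disjoint_right.1 hAB hi
      rw [hxy (Finset.mem_union_left _ hi), hy₀ (Finset.mem_union_right A hi)]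
      simp [y₀, hiA]

lemma Dense.exists_disjoint_setOf_eqOn_subset [Finite α] [Nonempty α] {U : Set (ι → α)}
    (hUd : Dense U) (hUo : IsOpen U) (A : Finset ι) :
    ∃ B : Finset ι, Disjoint A B ∧ ∃ w : ι → α, {x | EqOn x w B} ⊆ U := by
  obtain ⟨B, hAB, w, hw⟩ :=
    hUd.exists_disjoint_setOf_restrict_mem_eqOn_subset hUo A (finite_univ (α := A → α))
  exact ⟨B, hAB, w, fun x hx => hw ⟨mem_univ _, hx⟩⟩

lemma exists_finite_fibers_setOf_eqOn_fiber_subset [Countable ι] [Finite α] [Nonempty α]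
    {U : ℕ → Set (ι → α)} (hUd : ∀ n, Dense (U n)) (hUo : ∀ n, IsOpen (U n)) :
    ∃ φ : ι → ℕ, (∀ j, (φ ⁻¹' {j}).Finite) ∧
      ∃ z : ι → α, ∀ j, {x | EqOn x z (φ ⁻¹' {j})} ⊆ U j := by
  classical
  have := Encodable.ofCountable ι
  choose B hAB w hw using fun j A => (hUd j).exists_disjoint_setOf_eqOn_subset (hUo j) A
  let A : ℕ → Finset ι := fun n =>
    Nat.rec ∅ (fun j Aj => Aj ∪ B j Aj ∪ (Encodable.decode j).toFinset) n
  have hA_mono : Monotone A :=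
    monotone_nat_of_le_succ fun j => Finset.subset_union_left.trans Finset.subset_union_left
  have hA_mem : ∀ i, ∃ j, i ∈ A (j + 1) :=
    fun i => ⟨Encodable.encode i, Finset.mem_union_right _ (by simp)⟩
  let φ i := Nat.find (hA_mem i)
  have hφ_mem : ∀ i, i ∈ A (φ i + 1) := fun i => Nat.find_spec (hA_mem i)
  have hφ_eq : ∀ j, ∀ i ∈ B j (A j), φ i = j := by
    intro j i hi
    refine le_antisymm (Nat.find_min' _ (Finset.mem_union_left _ (Finset.mem_union_right _ hi)))
      (not_lt.1 fun hlt => ?_)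
    exact Finset.disjoint_right.1 (hAB j (A j)) hi (hA_mono hlt (hφ_mem i))
  refine ⟨φ, fun j => (A (j + 1)).finite_toSet.subset fun i hi => hi ▸ hφ_mem i,
    fun i => w (φ i) (A (φ i)) i, fun j x hx => hw j (A j) fun i hi => ?_⟩
  have hij := hφ_eq j i hi
  rw [hx hij]
  simp only [hij]

lemma isNowhereDense_iInter_ge_compl_setOf_eqOn_fiber {φ : ι → ℕ}
    (hφ : ∀ j, (φ ⁻¹' {j}).Finite) (z : ι → α) (n : ℕ) :
    IsNowhereDense (⋂ j ≥ n, {x : ι → α | EqOn x z (φ ⁻¹' {j})}ᶜ) := by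
  classical
  rw [(isClosed_iInter fun j => isClosed_iInter fun _ =>
    (isOpen_setOf_eqOn (hφ j) z).isClosed_compl).isNowhereDense_iff, eq_empty_iff_forall_notMem]
  intro x hx
  obtain ⟨J, hJ⟩ := isOpen_interior.exists_finset_setOf_eqOn_subset hx
  let j := max n (J.sup φ + 1)
  have hJj : ∀ i ∈ J, φ i ≠ j := fun i hi => (Nat.lt_of_le_of_lt (J.le_sup hi)
    (Nat.lt_of_lt_of_le (Nat.lt_succ_self _) (le_max_right _ _))).ne
  let y := (φ ⁻¹' {j}).piecewise z x
  have hy : y ∈ interior (⋂ j ≥ n, {x : ι → α | EqOn x z (φ ⁻¹' {j})}ᶜ) :=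
    hJ fun i hi => piecewise_eq_of_notMem _ _ _ (hJj i hi)
  exact mem_iInter₂.1 (interior_subset hy) j (le_max_left _ _)
    fun i hi => piecewise_eq_of_mem _ _ _ hi

lemma isMeagre_setOf_finite_setOf_eqOn_fiber {φ : ι → ℕ} (hφ : ∀ j, (φ ⁻¹' {j}).Finite)
    (z : ι → α) : IsMeagre {x : ι → α | {j | EqOn x z (φ ⁻¹' {j})}.Finite} := by
  refine (isMeagre_iUnion fun n =>
    (isNowhereDense_iInter_ge_compl_setOf_eqOn_fiber hφ z n).isMeagre).mono fun x hx => ?_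
  obtain ⟨n, hn⟩ := hx.bddAbove
  exact mem_iUnion.2 ⟨n + 1, mem_iInter₂.2 fun j hj hxj => by have := hn hxj; omega⟩

end Cylinders

theorem meager_iff_finite_agreement_general {I : Type} [Countable I]
    (S : Set (I → Bool)) :
    IsMeagre S ↔ ∃ φ : I → ℕ, (∀ j : ℕ, (φ ⁻¹' {j}).Finite) ∧ ∃ z : I → Bool,
      ∀ x ∈ S, {j : ℕ | ∀ i : I, φ i = j → x i = z i}.Finite := by
  constructor
  · intro hS
    obtain ⟨U, hU_anti, hUo, hUd, hSU⟩ := hS.exists_antitone_isOpen_dense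
    obtain ⟨φ, hφ, z, hz⟩ := exists_finite_fibers_setOf_eqOn_fiber_subset hUd hUo
    refine ⟨φ, hφ, z, fun x hx => ?_⟩
    obtain ⟨n, hxn⟩ := mem_iUnion.1 (hSU hx)
    exact (finite_Iio n).subset fun j hj =>
      not_le.1 fun hnj => hxn (hU_anti hnj (hz j fun i hi => hj i hi))
  · rintro ⟨φ, hφ, z, hz⟩
    exact (isMeagre_setOf_finite_setOf_eqOn_fiber hφ z).mono hz

theorem meager_iff_finite_agreement {I : Type} [Countable I] [Infinite I]
    (S : Set (I → Bool)) :
    IsMeagre S ↔ ∃ φ : I → ℕ, (∀ j : ℕ, (φ ⁻¹' {j}).Finite) ∧ ∃ z : I → Bool,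
      ∀ x ∈ S, {j : ℕ | ∀ i : I, φ i = j → x i = z i}.Finite :=
  meager_iff_finite_agreement_general S
end

section
/- Let 𝓡 be a countable collection of meager relations on 2^ω. Then there exist nowhere meager subsets E_α of 2^ω for α < 𝔠 such that for every R ∈ 𝓡 with arity n_R and all pairwise distinct ordinals α_0, …, α_{n_R−1} < 𝔠, every tuple x ∈ ∏_{k<n_R} E_{α_k} satisfies x ∉ R. -/
/-- A subset of a space is nowhere meager if its intersection with every non-empty open set
is non-meager. -/
def NowhereMeager {X : Type*} [TopologicalSpace X] (S : Set X) : Prop :=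
  ∀ U : Set X, IsOpen U → U.Nonempty → ¬ IsMeagre (S ∩ U)

/-!
Each meager relation misses an intersection of countably many dense open sets, and these are
what tuples have to be placed in. Fix a nonprincipal ultrafilter `𝒰` on `ℕ`. Cut `ℕ` into finite
blocks and, block by block, prescribe the content of block `k` of a point `x` as a function of the
bits of `x` before that block and of the first `k` bits of a tag `z`. Since only finitely many
such configurations occur at each block, the prescriptions can be chosen so that any tuple of
points realising them for tags with distinct `k`-prefixes lies in the first `k` of the dense open
sets. Let `E z` be the set of points that follow the prescriptions for `z` on a `𝒰`-large set of
blocks. Tuples from `E`-sets with distinct tags follow their prescriptions simultaneously on some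
late block, hence lie in all the dense open sets. To see that `E z ∩ U` is not meager, fuse two
points of `U` that both meet countably many given dense open sets while following the
prescriptions on complementary families of blocks: the union of the two families is cofinite, so
one of them is `𝒰`-large.
-/

open Set Filter Topology Function PiNat

theorem IsMeagre.exists_dense_isOpen_seq {X : Type*} [TopologicalSpace X] {s : Set X}
    (hs : IsMeagre s) :
    ∃ D : ℕ → Set X, (∀ n, IsOpen (D n)) ∧ (∀ n, Dense (D n)) ∧ ⋂ n, D n ⊆ sᶜ := by
  obtain ⟨S, hSo, hSd, hSc, hS⟩ := mem_residual_iff.1 hs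
  obtain ⟨D, hD⟩ := (hSc.insert univ).exists_eq_range (insert_nonempty _ _)
  have hDS : ∀ n, D n ∈ insert univ S := fun n => by rw [hD]; exact mem_range_self n
  refine ⟨D, fun n => ?_, fun n => ?_, fun x hx => hS fun t ht => ?_⟩
  · rcases hDS n with h | h
    exacts [h ▸ isOpen_univ, hSo _ h]
  · rcases hDS n with h | h
    exacts [h ▸ dense_univ, hSd _ h]
  · obtain ⟨n, rfl⟩ : t ∈ range D := by rw [← hD]; exact mem_insert_of_mem _ ht
    exact mem_iInter.1 hx n

theorem continuous_extend_pi {κ S Y : Type*} [TopologicalSpace Y] (s : κ → S) (g : S → Y) :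
    Continuous fun y : κ → Y => extend s y g := by
  classical
  refine continuous_pi fun b => ?_
  simp only [extend_def]
  split_ifs
  exacts [continuous_apply _, continuous_const]

theorem isOpenMap_comp_of_injective {κ S Y : Type*} [TopologicalSpace Y] {s : κ → S}
    (hs : Injective s) : IsOpenMap fun g : S → Y => g ∘ s := by
  refine IsOpenMap.of_sections fun g => ⟨fun y => extend s y g,
    (continuous_extend_pi s g).continuousAt, funext fun b => ?_, fun y => extend_comp hs y g⟩
  by_cases hb : ∃ a, s a = b
  · obtain ⟨a, rfl⟩ := hb
    exact hs.extend_apply _ _ a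
  · exact extend_apply' _ _ _ hb

theorem eventually_injective_restrict {κ α : Type*} [Finite κ] {z : κ → ℕ → α}
    (hz : Injective z) : ∀ᶠ k in atTop, Injective fun i (n : Fin k) => z i n := by
  have : ∀ a b, ∀ᶠ k in atTop, (fun n : Fin k => z a n) = (fun n : Fin k => z b n) → a = b := by
    intro a b
    by_cases hab : a = b
    · exact Eventually.of_forall fun _ _ => hab
    obtain ⟨n, hn⟩ := ne_iff.1 (hz.ne hab)
    filter_upwards [eventually_gt_atTop n] with k hk h
    exact absurd (congrFun h ⟨n, hk⟩) hn
  filter_upwards [eventually_all.2 fun a => eventually_all.2 (this a)] with k hk a b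
  exact hk a b

namespace PiNat

variable {E : ℕ → Type*}

theorem cylinder_subset_cylinder {x y : ∀ n, E n} {M N : ℕ} (hy : y ∈ cylinder x M)
    (h : M ≤ N) : cylinder y N ⊆ cylinder x M :=
  fun _ hw i hi => (hw i (hi.trans_le h)).trans (hy i hi)

variable [∀ n, TopologicalSpace (E n)] [∀ n, DiscreteTopology (E n)]

theorem isClosed_cylinder (x : ∀ n, E n) (N : ℕ) : IsClosed (cylinder x N) := by
  rw [cylinder_eq_pi]
  exact isClosed_set_pi fun _ _ => isClosed_discrete _

theorem eventually_cylinder_subset {x : ∀ n, E n} {U : Set (∀ n, E n)} (hU : U ∈ 𝓝 x) :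
    ∀ᶠ N in atTop, cylinder x N ⊆ U := by
  obtain ⟨_, ⟨c, N, rfl⟩, hxc, hcU⟩ := (isTopologicalBasis_cylinders E).mem_nhds_iff.1 hU
  rw [← mem_cylinder_iff_eq.1 hxc] at hcU
  exact eventually_atTop.2 ⟨N, fun _ hN => (cylinder_anti x hN).trans hcU⟩

theorem eventually_pi_cylinder_subset {κ : Type*} [Finite κ] {y : κ → ∀ n, E n}
    {U : Set (κ → ∀ n, E n)} (hU : U ∈ 𝓝 y) :
    ∀ᶠ N in atTop, univ.pi (fun i => cylinder (y i) N) ⊆ U := by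
  rw [nhds_pi, mem_pi'] at hU
  obtain ⟨I, V, hV, hVU⟩ := hU
  filter_upwards [eventually_all.2 fun i => eventually_cylinder_subset (hV i)] with N hN
  exact fun w hw => hVU fun i _ => hN i (hw i (mem_univ i))

theorem nonempty_iInter_cylinder [∀ n, CompactSpace (E n)] {x : ℕ → ∀ n, E n} {N : ℕ → ℕ}
    (h : ∀ m, cylinder (x (m + 1)) (N (m + 1)) ⊆ cylinder (x m) (N m)) :
    (⋂ m, cylinder (x m) (N m)).Nonempty :=
  IsCompact.nonempty_iInter_of_sequence_nonempty_isCompact_isClosed _ h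
    (fun m => ⟨x m, self_mem_cylinder _ _⟩) (isClosed_cylinder _ _).isCompact
    fun _ => isClosed_cylinder _ _

theorem exists_pi_cylinder_subset_of_dense {S J : Type*} [Finite S] [Finite J]
    {κ : J → Type*} [∀ j, Finite (κ j)] {G : ∀ j, Set (κ j → ∀ n, E n)}
    (hGo : ∀ j, IsOpen (G j)) (hGd : ∀ j, Dense (G j)) (g₀ : S → ∀ n, E n) (N₀ : ℕ) :
    ∃ g : S → ∀ n, E n, (∀ a, g a ∈ cylinder (g₀ a) N₀) ∧ ∀ᶠ N in atTop,
      ∀ j (s : κ j → S), Injective s → univ.pi (fun i => cylinder (g (s i)) N) ⊆ G j := by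
  let W : (Σ j, {s : κ j → S // Injective s}) → Set (S → ∀ n, E n) :=
    fun p => (· ∘ p.2.1) ⁻¹' G p.1
  have hWo : ∀ p, IsOpen (W p) := fun p => (hGo p.1).preimage (by fun_prop)
  have hWd : ∀ p, Dense (W p) := fun p => (hGd p.1).preimage (isOpenMap_comp_of_injective p.2.2)
  have hW : Dense (⋂ p, W p) := by
    rw [← sInter_range]
    exact (finite_range W).dense_sInter (forall_mem_range.2 hWo) (forall_mem_range.2 hWd)
  obtain ⟨g, hgW, hg₀⟩ := hW.exists_mem_open
    (isOpen_set_pi finite_univ fun a _ => isOpen_cylinder _ (g₀ a) N₀)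
    ⟨g₀, fun a _ => self_mem_cylinder _ _⟩
  refine ⟨g, fun a => hg₀ a (mem_univ a), ?_⟩
  filter_upwards [eventually_all.2 fun p =>
    eventually_pi_cylinder_subset ((hGo p.1).mem_nhds (mem_iInter.1 hgW p))] with N hN j s hs
  exact hN ⟨j, s, hs⟩

end PiNat

local notation "𝒞" => ℕ → Bool

/-- Block `k` is `[bound k, bound (k + 1))`. A slot at block `k` is a pair `(σ, τ)` of the first
`bound k` bits of a point and the first `k` bits of its tag, and `fill k (σ, τ)` extends `σ` by
the content prescribed for that slot. -/
structure ComplianceScheme {J : Type*} {κ : J → Type*} (G : ∀ j, Set (κ j → 𝒞))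
    (rank : J → ℕ) where
  bound : ℕ → ℕ
  fill : ∀ k, (Fin (bound k) → Bool) × (Fin k → Bool) → 𝒞
  strictMono_bound : StrictMono bound
  fill_apply : ∀ k σ (i : Fin (bound k)), fill k σ i = σ.1 i
  pi_subset : ∀ k j, rank j ≤ k → ∀ s : κ j → (Fin (bound k) → Bool) × (Fin k → Bool),
    Injective s → univ.pi (fun i => cylinder (fill k (s i)) (bound (k + 1))) ⊆ G j

namespace ComplianceScheme

variable {J : Type*} {κ : J → Type*} {G : ∀ j, Set (κ j → 𝒞)} {rank : J → ℕ}

theorem nonempty [∀ j, Finite (κ j)] (hGo : ∀ j, IsOpen (G j)) (hGd : ∀ j, Dense (G j))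
    (hrank : ∀ k, {j | rank j ≤ k}.Finite) : Nonempty (ComplianceScheme G rank) := by
  have step : ∀ k L : ℕ, ∃ (L' : ℕ) (γ : (Fin L → Bool) × (Fin k → Bool) → 𝒞), L < L' ∧
      (∀ σ (i : Fin L), γ σ i = σ.1 i) ∧ ∀ j, rank j ≤ k →
        ∀ s : κ j → (Fin L → Bool) × (Fin k → Bool), Injective s →
          univ.pi (fun i => cylinder (γ (s i)) L') ⊆ G j := by
    intro k L
    have := (hrank k).to_subtype
    obtain ⟨γ, hγ, hsub⟩ := exists_pi_cylinder_subset_of_dense (J := {j | rank j ≤ k})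
      (fun j => hGo j) (fun j => hGd j)
      (fun (σ : (Fin L → Bool) × (Fin k → Bool)) i => if h : i < L then σ.1 ⟨i, h⟩ else false) L
    obtain ⟨L', hsub, hL'⟩ := (hsub.and (eventually_gt_atTop L)).exists
    exact ⟨L', γ, hL', fun σ i => by simpa using hγ σ i i.2, fun j hj => hsub ⟨j, hj⟩⟩
  choose next fill hlt hfill hsub using step
  let bound : ℕ → ℕ := fun k => Nat.rec 0 next k
  exact ⟨⟨bound, fun k => fill k (bound k), strictMono_nat_of_lt_succ fun k => hlt k _,
    fun k => hfill k _, fun k => hsub k _⟩⟩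

variable (Γ : ComplianceScheme G rank)

/-- Agrees with `x` below `bound k` and carries the content prescribed for the tag `z` on block
`k`; its bits beyond block `k` are arbitrary. -/
def comply (k : ℕ) (z x : 𝒞) : 𝒞 := Γ.fill k (fun i => x i, fun i => z i)

def compliant (z : 𝒞) (k : ℕ) : Set 𝒞 := {x | x ∈ cylinder (Γ.comply k z x) (Γ.bound (k + 1))}

def E (z : 𝒞) : Set 𝒞 := {x | ∀ᶠ k in hyperfilter ℕ, x ∈ Γ.compliant z k}

theorem comply_mem_cylinder (k : ℕ) (z x : 𝒞) : Γ.comply k z x ∈ cylinder x (Γ.bound k) :=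
  fun i hi => Γ.fill_apply k _ ⟨i, hi⟩

theorem comply_congr {k : ℕ} (z : 𝒞) {x x' : 𝒞} (h : x' ∈ cylinder x (Γ.bound k)) :
    Γ.comply k z x' = Γ.comply k z x := by
  unfold comply
  congr 2
  exact funext fun i => h i i.2

theorem cylinder_comply_subset_compliant (k : ℕ) (z x : 𝒞) :
    cylinder (Γ.comply k z x) (Γ.bound (k + 1)) ⊆ Γ.compliant z k := by
  intro y hy
  have hyx : y ∈ cylinder x (Γ.bound k) :=
    cylinder_subset_cylinder (Γ.comply_mem_cylinder k z x)
      (Γ.strictMono_bound.monotone k.le_succ) hy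
  rwa [compliant, mem_ofPred_eq, Γ.comply_congr z hyx]

theorem exists_mem_cylinder_compliant_Ico (z x : 𝒞) {b b' : ℕ} (h : b ≤ b') :
    ∃ x' ∈ cylinder x (Γ.bound b),
      ∀ t ∈ Ico b b', cylinder x' (Γ.bound b') ⊆ Γ.compliant z t := by
  induction b', h using Nat.le_induction with
  | base => exact ⟨x, self_mem_cylinder _ _, by simp⟩
  | succ b' hbb' ih =>
    obtain ⟨x', hx', hx'C⟩ := ih
    have hmono := Γ.strictMono_bound.monotone
    have hnext : cylinder (Γ.comply b' z x') (Γ.bound (b' + 1)) ⊆ cylinder x' (Γ.bound b') :=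
      cylinder_subset_cylinder (Γ.comply_mem_cylinder b' z x') (hmono b'.le_succ)
    refine ⟨Γ.comply b' z x',
      cylinder_subset_cylinder hx' (hmono hbb') (Γ.comply_mem_cylinder b' z x'), ?_⟩
    rintro t ⟨hbt, ht⟩
    rcases (Nat.lt_succ_iff_lt_or_eq.1 ht) with ht | rfl
    · exact hnext.trans (hx'C t ⟨hbt, ht⟩)
    · exact Γ.cylinder_comply_subset_compliant t z x'

theorem exists_halfStep (z : 𝒞) {D : Set 𝒞} (hDo : IsOpen D) (hDd : Dense D) (p q : 𝒞)
    (b : ℕ) : ∃ b', b < b' ∧ ∃ p' ∈ cylinder p (Γ.bound b), ∃ q' ∈ cylinder q (Γ.bound b),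
      cylinder p' (Γ.bound b') ⊆ D ∧
        ∀ t ∈ Ico b b', cylinder q' (Γ.bound b') ⊆ Γ.compliant z t := by
  obtain ⟨p', hp'D, hp'⟩ :=
    hDd.exists_mem_open (isOpen_cylinder _ p _) ⟨p, self_mem_cylinder _ _⟩
  obtain ⟨b', hb'D, hbb'⟩ := ((Γ.strictMono_bound.tendsto_atTop.eventually
    (eventually_cylinder_subset (hDo.mem_nhds hp'D))).and (eventually_gt_atTop b)).exists
  obtain ⟨q', hq', hq'C⟩ := Γ.exists_mem_cylinder_compliant_Ico z q hbb'.le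
  exact ⟨b', hbb', p', hp', q', hq', hb'D, hq'C⟩

/-- Two cylinders at block level `level`, around `left` and `right`. -/
structure FusionState where
  level : ℕ
  left : 𝒞
  right : 𝒞

def FusionStep (z : 𝒞) (D : Set 𝒞) (s s' : FusionState) : Prop :=
  s.level < s'.level ∧
    cylinder s'.left (Γ.bound s'.level) ⊆ cylinder s.left (Γ.bound s.level) ∩ D ∧
    cylinder s'.right (Γ.bound s'.level) ⊆ cylinder s.right (Γ.bound s.level) ∩ D ∧
    ∀ t ∈ Ico s.level s'.level, cylinder s'.left (Γ.bound s'.level) ⊆ Γ.compliant z t ∨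
      cylinder s'.right (Γ.bound s'.level) ⊆ Γ.compliant z t

theorem exists_fusionStep (z : 𝒞) {D : Set 𝒞} (hDo : IsOpen D) (hDd : Dense D)
    (s : FusionState) : ∃ s', Γ.FusionStep z D s s' := by
  obtain ⟨b₁, hb₁, p₁, hp₁, q₁, hq₁, hp₁D, hq₁C⟩ :=
    Γ.exists_halfStep z hDo hDd s.left s.right s.level
  obtain ⟨b₂, hb₂, q₂, hq₂, p₂, hp₂, hq₂D, hp₂C⟩ := Γ.exists_halfStep z hDo hDd q₁ p₁ b₁
  have hmono := Γ.strictMono_bound.monotone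
  have hp : cylinder p₂ (Γ.bound b₂) ⊆ cylinder p₁ (Γ.bound b₁) :=
    cylinder_subset_cylinder hp₂ (hmono hb₂.le)
  have hq : cylinder q₂ (Γ.bound b₂) ⊆ cylinder q₁ (Γ.bound b₁) :=
    cylinder_subset_cylinder hq₂ (hmono hb₂.le)
  refine ⟨⟨b₂, p₂, q₂⟩, hb₁.trans hb₂,
    subset_inter (hp.trans (cylinder_subset_cylinder hp₁ (hmono hb₁.le))) (hp.trans hp₁D),
    subset_inter (hq.trans (cylinder_subset_cylinder hq₁ (hmono hb₁.le))) hq₂D, ?_⟩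
  rintro t ⟨ht, ht'⟩
  rcases lt_or_ge t b₁ with htb₁ | htb₁
  · exact Or.inr (hq.trans (hq₁C t ⟨ht, htb₁⟩))
  · exact Or.inl (hp₂C t ⟨htb₁, ht'⟩)

theorem exists_compliant_cover (z : 𝒞) {D : ℕ → Set 𝒞} (hDo : ∀ m, IsOpen (D m))
    (hDd : ∀ m, Dense (D m)) (b₀ : ℕ) (u : 𝒞) : ∃ x y : 𝒞,
      x ∈ cylinder u (Γ.bound b₀) ∩ ⋂ m, D m ∧ y ∈ cylinder u (Γ.bound b₀) ∩ ⋂ m, D m ∧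
      ∀ t, b₀ ≤ t → x ∈ Γ.compliant z t ∨ y ∈ Γ.compliant z t := by
  choose next hnext using fun m => Γ.exists_fusionStep z (hDo m) (hDd m)
  let s : ℕ → FusionState := fun m => Nat.rec ⟨b₀, u, u⟩ next m
  have hs : ∀ m, Γ.FusionStep z (D m) (s m) (s (m + 1)) := fun m => hnext m (s m)
  obtain ⟨x, hx⟩ := nonempty_iInter_cylinder (x := fun m => (s m).left)
    (N := fun m => Γ.bound (s m).level) fun m => (hs m).2.1.trans inter_subset_left
  obtain ⟨y, hy⟩ := nonempty_iInter_cylinder (x := fun m => (s m).right)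
    (N := fun m => Γ.bound (s m).level) fun m => (hs m).2.2.1.trans inter_subset_left
  rw [mem_iInter] at hx hy
  have hlevel : StrictMono fun m => (s m).level := strictMono_nat_of_lt_succ fun m => (hs m).1
  refine ⟨x, y, ⟨hx 0, mem_iInter.2 fun m => ((hs m).2.1 (hx (m + 1))).2⟩,
    ⟨hy 0, mem_iInter.2 fun m => ((hs m).2.2.1 (hy (m + 1))).2⟩, fun t ht => ?_⟩
  obtain ⟨m, hm, hm'⟩ :=
    hlevel.exists_between_of_tendsto_atTop hlevel.tendsto_atTop (Nat.lt_succ_of_le ht)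
  exact ((hs m).2.2.2 t ⟨Nat.lt_succ_iff.1 hm, hm'⟩).imp (· (hx (m + 1))) (· (hy (m + 1)))

theorem nowhereMeager_E (z : 𝒞) : NowhereMeager (Γ.E z) := by
  rintro U hUo ⟨u, hu⟩ hmeagre
  obtain ⟨D, hDo, hDd, hD⟩ := hmeagre.exists_dense_isOpen_seq
  obtain ⟨b₀, hb₀⟩ := (Γ.strictMono_bound.tendsto_atTop.eventually
    (eventually_cylinder_subset (hUo.mem_nhds hu))).exists
  obtain ⟨x, y, ⟨hxU, hxD⟩, ⟨hyU, hyD⟩, hcover⟩ := Γ.exists_compliant_cover z hDo hDd b₀ u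
  have : ∀ᶠ t in hyperfilter ℕ, x ∈ Γ.compliant z t ∨ y ∈ Γ.compliant z t :=
    (eventually_atTop.2 ⟨b₀, hcover⟩).filter_mono Nat.hyperfilter_le_atTop
  rcases Ultrafilter.eventually_or.1 this with hx | hy
  · exact hD hxD ⟨hx, hb₀ hxU⟩
  · exact hD hyD ⟨hy, hb₀ hyU⟩

theorem mem_of_forall_mem_E [∀ j, Finite (κ j)] {j : J} {z : κ j → 𝒞} (hz : Injective z)
    {x : κ j → 𝒞} (hx : ∀ i, x i ∈ Γ.E (z i)) : x ∈ G j := by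
  obtain ⟨k, ⟨hk, hinj⟩, hxk⟩ := ((((eventually_ge_atTop (rank j)).and
    (eventually_injective_restrict hz)).filter_mono Nat.hyperfilter_le_atTop).and
      (eventually_all.2 hx)).exists
  exact Γ.pi_subset k j hk _ (fun a b h => hinj (congrArg Prod.snd h)) fun i _ => hxk i

end ComplianceScheme

theorem exists_nowhereMeager_family {J : Type*} [Countable J] {κ : J → Type*}
    [∀ j, Finite (κ j)] {G : ∀ j, Set (κ j → 𝒞)} (hGo : ∀ j, IsOpen (G j))
    (hGd : ∀ j, Dense (G j)) : ∃ E : 𝒞 → Set 𝒞, (∀ z, NowhereMeager (E z)) ∧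
      ∀ j (z : κ j → 𝒞), Injective z → ∀ x : κ j → 𝒞, (∀ i, x i ∈ E (z i)) → x ∈ G j := by
  obtain ⟨rank, hrank⟩ := Countable.exists_injective_nat J
  obtain ⟨Γ⟩ := ComplianceScheme.nonempty hGo hGd fun k =>
    ((finite_le_nat k).preimage hrank.injOn : (rank ⁻¹' {i | i ≤ k}).Finite)
  exact ⟨Γ.E, Γ.nowhereMeager_E, fun j z hz x hx => Γ.mem_of_forall_mem_E hz hx⟩

theorem maintech_general {ι : Type*} [Countable ι] (n : ι → ℕ)
    (R : ∀ i, Set (Fin (n i) → (ℕ → Bool))) (hR : ∀ i, IsMeagre (R i)) :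
    ∃ (A : Type) (E : A → Set (ℕ → Bool)), Cardinal.mk A = Cardinal.continuum ∧
      (∀ a : A, NowhereMeager (E a)) ∧
      ∀ i (a : Fin (n i) → A), Function.Injective a →
        ∀ x : Fin (n i) → (ℕ → Bool), (∀ k, x k ∈ E (a k)) → x ∉ R i := by
  choose D hDo hDd hD using fun i => (hR i).exists_dense_isOpen_seq
  obtain ⟨E, hE, hfree⟩ := exists_nowhereMeager_family (κ := fun j : ι × ℕ => Fin (n j.1))
    (G := fun j => D j.1 j.2) (fun j => hDo _ _) (fun j => hDd _ _)
  refine ⟨ℕ → Bool, E, by simp, hE, fun i a ha x hx => ?_⟩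
  exact hD i (mem_iInter.2 fun m => hfree (i, m) a ha x hx)

theorem maintech {ι : Type*} [Countable ι] (n : ι → ℕ) (hn : ∀ i, 1 ≤ n i)
    (R : ∀ i, Set (Fin (n i) → (ℕ → Bool))) (hR : ∀ i, IsMeagre (R i)) :
    ∃ (A : Type) (E : A → Set (ℕ → Bool)), Cardinal.mk A = Cardinal.continuum ∧
      (∀ a : A, NowhereMeager (E a)) ∧
      ∀ i (a : Fin (n i) → A), Function.Injective a →
        ∀ x : Fin (n i) → (ℕ → Bool), (∀ k, x k ∈ E (a k)) → x ∉ R i :=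
  maintech_general n R hR
end

section
/- Let X be a crowded Polish space and 𝓖 a non-empty collection of dense G_δ subsets of X with |𝓖| < 𝔡. If ⋂𝓖 is dense in X, then ⋂𝓖 is non-meager in X. -/
/-!
If `⋂₀ G` were meagre it would miss `⋂ n, V n` for some dense open sets `V n`. As `⋂₀ G` is
dense, one grows a tree of closed balls indexed by finite sequences of naturals, centred in
`⋂₀ G`, the nodes of depth `n + 1` lying in `V n` and the child `j` of a node lying in the ball
of radius `2⁻¹ ^ (j + 1)` times the node's radius around the node's centre. Writing `g ∈ G` as
`⋂ n, U n` with `U n` open, every centre at depth `n` lies in the open set `⋂ k ≤ n, U k`, so `g`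
prescribes at each node an index `J_g` beyond which all children stay inside that set. Fewer
than `𝔡` bounds for the functions `J_g` leave a branch that infinitely often beats every `J_g`;
the limit point of that branch lies in every `g ∈ G` and every `V n`.
-/

/-- The dominating number `𝔡`. -/
noncomputable def dNumber : Cardinal :=
  sInf { c | ∃ D : Set (ℕ → ℕ), Cardinal.mk D = c ∧
    ∀ g : ℕ → ℕ, ∃ f ∈ D, ∀ᶠ m in Filter.atTop, g m ≤ f m }

open Filter Metric Set Topology

lemma exists_frequently_lt_of_mk_lt_dNumber {ι : Type} (φ : ι → ℕ → ℕ)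
    (hι : Cardinal.mk ι < dNumber) : ∃ g : ℕ → ℕ, ∀ i, ∃ᶠ m in atTop, φ i m < g m := by
  by_contra! hdom
  have hle : dNumber ≤ Cardinal.mk (range φ) := by
    refine csInf_le' ⟨range φ, rfl, fun g => ?_⟩
    obtain ⟨i, hi⟩ := hdom g
    exact ⟨φ i, mem_range_self i, hi⟩
  exact (hle.trans Cardinal.mk_range_le).not_gt hι

lemma exists_monotone_id_le_le (u : ℕ → ℕ) : ∃ v : ℕ → ℕ, Monotone v ∧ id ≤ v ∧ u ≤ v := by
  refine ⟨fun m => m + ∑ k ∈ Finset.range (m + 1), u k, monotone_nat_of_le_succ fun m => ?_,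
    fun m => Nat.le_add_right _ _, fun m => ?_⟩
  · simp only [Finset.sum_range_succ _ (m + 1)]
    omega
  · exact le_add_left (Finset.single_le_sum (fun _ _ => Nat.zero_le _)
      (Finset.self_mem_range_succ m))

/-- If `h (m + 1) ≤ Γ (h m)` from `n` on, then `h N ≤ Γ^[N - n] (h n) ≤ Γ^[N + 1] N` for
large `N`. -/
lemma frequently_lt_succ_of_frequently_iterate_lt {Γ h : ℕ → ℕ} (hΓ : Monotone Γ)
    (hΓid : id ≤ Γ) (hfreq : ∃ᶠ N in atTop, Γ^[N + 1] N < h N) :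
    ∃ᶠ m in atTop, Γ (h m) < h (m + 1) := by
  rw [frequently_atTop]
  intro n
  by_contra! hle
  have hiter : ∀ k, h (n + k) ≤ Γ^[k] (h n) := by
    intro k
    induction k with
    | zero => rfl
    | succ k ih =>
      rw [Function.iterate_succ_apply']
      exact (hle (n + k) (Nat.le_add_right n k)).trans (hΓ ih)
  obtain ⟨N, hN, hlt⟩ := frequently_atTop.mp hfreq (max n (h n))
  have hnN : n ≤ N := le_of_max_le_left hN
  exact lt_irrefl (h N) <| calc
    h N = h (n + (N - n)) := by rw [Nat.add_sub_cancel' hnN]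
    _ ≤ Γ^[N - n] (h n) := hiter _
    _ ≤ Γ^[N - n] N := hΓ.iterate _ (le_of_max_le_right hN)
    _ ≤ Γ^[N + 1] N := Function.monotone_iterate_of_id_le hΓid (by omega) N
    _ < h N := hlt

lemma exists_monotone_frequently_lt_succ {ι : Type} (γ : ι → ℕ → ℕ)
    (hι : Cardinal.mk ι < dNumber) :
    ∃ h : ℕ → ℕ, Monotone h ∧ id ≤ h ∧ ∀ i, ∃ᶠ m in atTop, γ i (h m) < h (m + 1) := by
  choose Γ hΓ hΓid hγΓ using fun i => exists_monotone_id_le_le (γ i)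
  obtain ⟨h₀, hh₀⟩ := exists_frequently_lt_of_mk_lt_dNumber (fun i N => (Γ i)^[N + 1] N) hι
  obtain ⟨h, hmono, hid, hh₀h⟩ := exists_monotone_id_le_le h₀
  refine ⟨h, hmono, hid, fun i => ?_⟩
  have hfreq : ∃ᶠ N in atTop, (Γ i)^[N + 1] N < h N :=
    (hh₀ i).mono fun N hN => hN.trans_le (hh₀h N)
  exact (frequently_lt_succ_of_frequently_iterate_lt (hΓ i) (hΓid i) hfreq).mono
    fun m hm => (hγΓ i (h m)).trans_lt hm

lemma List.finite_setOf_length_le_forall_le (n m : ℕ) :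
    {l : List ℕ | l.length ≤ n ∧ ∀ x ∈ l, x ≤ m}.Finite := by
  refine ((List.finite_length_le (Iic m) n).image (List.map Subtype.val)).subset ?_
  rintro l ⟨hlen, hle⟩
  lift l to List (Iic m) using hle
  exact ⟨l, by simpa using hlen, rfl⟩

lemma exists_bound_of_length_le_forall_le (u : List ℕ → ℕ) :
    ∃ B : ℕ → ℕ, ∀ k l, l.length ≤ k → (∀ x ∈ l, x ≤ k) → u l ≤ B k := by
  choose B hB using fun k => ((List.finite_setOf_length_le_forall_le k k).image u).bddAbove
  exact ⟨B, fun k l hlen hle => hB k (mem_image_of_mem u ⟨hlen, hle⟩)⟩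

section Metric

variable {X : Type*} [PseudoMetricSpace X]

lemma exists_forall_mem_closedBall_of_dist_add_le_half [CompleteSpace X] {y : ℕ → X}
    {ρ : ℕ → ℝ} (hρ : ∀ m, 0 ≤ ρ m) (hy : ∀ m, dist (y (m + 1)) (y m) + ρ (m + 1) ≤ ρ m / 2) :
    ∃ x, ∀ m, x ∈ closedBall (y m) (ρ m) := by
  have hanti : Antitone fun m => closedBall (y m) (ρ m) :=
    antitone_nat_of_succ_le fun m =>
      closedBall_subset_closedBall' (by linarith [hy m, hρ m, dist_comm (y m) (y (m + 1))])
  have hρle : ∀ m, ρ m ≤ ρ 0 / 2 ^ m := by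
    intro m
    induction m with
    | zero => simp
    | succ m ih =>
      calc ρ (m + 1) ≤ ρ m / 2 := by linarith [hy m, dist_nonneg (x := y (m + 1)) (y := y m)]
        _ ≤ ρ 0 / 2 ^ m / 2 := by gcongr
        _ = ρ 0 / 2 ^ (m + 1) := by ring
  have hcauchy : CauchySeq y := cauchySeq_of_le_geometric_two (C := ρ 0) fun m => by
    have : ρ 0 / 2 / 2 ^ m = ρ 0 / 2 ^ m / 2 := by ring
    rw [dist_comm, this]
    linarith [hy m, hρ (m + 1), hρle m]
  obtain ⟨x, hx⟩ := cauchySeq_tendsto_of_complete hcauchy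
  refine ⟨x, fun m => isClosed_closedBall.mem_of_tendsto hx ?_⟩
  filter_upwards [eventually_ge_atTop m] with p hp
  exact hanti hp (mem_closedBall_self (hρ p))

lemma exists_closedBall_subset_of_dense {D V : Set X} (hD : Dense D) (hV : IsOpen V)
    (hVd : Dense V) (p : X) {δ : ℝ} (hδ : 0 < δ) :
    ∃ c ∈ D, ∃ r > 0, dist c p + r < δ ∧ closedBall c r ⊆ V := by
  obtain ⟨c, ⟨hcp, hcV⟩, hcD⟩ := hD.inter_open_nonempty _ (isOpen_ball.inter hV)
    (hVd.inter_open_nonempty _ isOpen_ball ⟨p, mem_ball_self (half_pos hδ)⟩)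
  obtain ⟨ε, hε, hεV⟩ := isOpen_iff.mp hV c hcV
  refine ⟨c, hcD, min (ε / 2) (δ / 2), by positivity, ?_,
    (closedBall_subset_ball ?_).trans hεV⟩
  · linarith [min_le_right (ε / 2) (δ / 2), mem_ball.mp hcp]
  · linarith [min_le_left (ε / 2) (δ / 2)]

lemma eventually_ball_pow_mul_subset {U : Set X} {x : X} (hU : U ∈ 𝓝 x) (r : ℝ) :
    ∀ᶠ j in atTop, ball x (2⁻¹ ^ j * r) ⊆ U := by
  obtain ⟨ε, hε, hεU⟩ := Metric.mem_nhds_iff.mp hU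
  have hlim : Tendsto (fun j => (2⁻¹ : ℝ) ^ j * r) atTop (𝓝 0) := by
    simpa using (tendsto_pow_atTop_nhds_zero_of_lt_one (by norm_num : (0 : ℝ) ≤ 2⁻¹)
      (by norm_num)).mul_const r
  filter_upwards [hlim.eventually (gt_mem_nhds hε)] with j hj
  exact (ball_subset_ball hj.le).trans hεU

/-- A node is listed from the leaf back to the root, so `j :: s` is the `j`-th child of `s`. -/
structure NestedBallScheme (X : Type*) [PseudoMetricSpace X] where
  center : List ℕ → X
  radius : List ℕ → ℝ
  radius_pos : ∀ s, 0 < radius s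
  dist_add_radius_lt : ∀ j s,
    dist (center (j :: s)) (center s) + radius (j :: s) < 2⁻¹ ^ (j + 1) * radius s

namespace NestedBallScheme

def branch (f : ℕ → ℕ) (m : ℕ) : List ℕ := ((List.range m).map f).reverse

lemma branch_succ (f : ℕ → ℕ) (m : ℕ) : branch f (m + 1) = f m :: branch f m := by
  simp [branch, List.range_succ]

lemma length_branch (f : ℕ → ℕ) (m : ℕ) : (branch f m).length = m := by
  simp [branch]

lemma mem_branch {f : ℕ → ℕ} {m x : ℕ} : x ∈ branch f m ↔ ∃ i < m, f i = x := by
  simp [branch]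

variable (T : NestedBallScheme X)

lemma closedBall_child_subset_ball (j : ℕ) (s : List ℕ) :
    closedBall (T.center (j :: s)) (T.radius (j :: s)) ⊆
      ball (T.center s) (2⁻¹ ^ (j + 1) * T.radius s) :=
  closedBall_subset_ball' (by linarith [T.dist_add_radius_lt j s])

lemma exists_forall_mem_closedBall_branch [CompleteSpace X] (f : ℕ → ℕ) :
    ∃ x, ∀ m, x ∈ closedBall (T.center (branch f m)) (T.radius (branch f m)) := by
  refine exists_forall_mem_closedBall_of_dist_add_le_half (fun m => (T.radius_pos _).le)
    fun m => ?_
  have hpow : (2⁻¹ : ℝ) ^ (f m + 1) ≤ 2⁻¹ := pow_le_of_le_one (by norm_num) (by norm_num) (by simp)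
  rw [branch_succ]
  nlinarith [T.dist_add_radius_lt (f m) (branch f m), T.radius_pos (branch f m)]

lemma frequently_mem_of_frequently_lt {f : ℕ → ℕ} {x : X}
    (hx : ∀ m, x ∈ closedBall (T.center (branch f m)) (T.radius (branch f m)))
    {W : List ℕ → Set X} {J : List ℕ → ℕ}
    (hJ : ∀ s j, J s ≤ j → ball (T.center s) (2⁻¹ ^ j * T.radius s) ⊆ W s)
    (hfreq : ∃ᶠ m in atTop, J (branch f m) < f m) :
    ∃ᶠ m in atTop, x ∈ W (branch f m) :=
  hfreq.mono fun m hm => hJ _ _ (by omega) <|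
    T.closedBall_child_subset_ball _ _ (branch_succ f m ▸ hx (m + 1))

end NestedBallScheme

lemma exists_nestedBallScheme [Nonempty X] {D : Set X} (hD : Dense D) {V : ℕ → Set X}
    (hVo : ∀ n, IsOpen (V n)) (hVd : ∀ n, Dense (V n)) :
    ∃ T : NestedBallScheme X, (∀ s, T.center s ∈ D) ∧
      ∀ j s, closedBall (T.center (j :: s)) (T.radius (j :: s)) ⊆ V s.length := by
  choose c hcD r hr hdist hsub using fun (n j : ℕ) (z : X × {ρ : ℝ // 0 < ρ}) =>
    exists_closedBall_subset_of_dense hD (hVo n) (hVd n) z.1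
      (mul_pos (pow_pos (by norm_num : (0 : ℝ) < 2⁻¹) (j + 1)) z.2.2)
  obtain ⟨x₀, hx₀⟩ := hD.nonempty
  let z : List ℕ → X × {ρ : ℝ // 0 < ρ} := fun s =>
    s.rec (x₀, ⟨1, one_pos⟩) fun j s zs => (c s.length j zs, ⟨r s.length j zs, hr _ _ _⟩)
  refine ⟨⟨fun s => (z s).1, fun s => (z s).2, fun s => (z s).2.2,
    fun j s => hdist _ _ _⟩, fun s => ?_, fun j s => hsub _ _ _⟩
  cases s with
  | nil => exact hx₀
  | cons j s => exact hcD _ _ _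

end Metric

lemma IsMeagre.exists_disjoint_iInter_isOpen_dense {X : Type*} [TopologicalSpace X]
    [BaireSpace X] {s : Set X} (hs : IsMeagre s) :
    ∃ V : ℕ → Set X, (∀ n, IsOpen (V n)) ∧ (∀ n, Dense (V n)) ∧ Disjoint s (⋂ n, V n) := by
  obtain ⟨t, hts, htG, htd⟩ := mem_residual.mp hs
  obtain ⟨V, hVo, rfl⟩ := htG.eq_iInter_nat
  exact ⟨V, hVo, fun n => htd.mono (iInter_subset V n), subset_compl_iff_disjoint_left.mp hts⟩

open NestedBallScheme in
theorem not_isMeagre_sInter_of_mk_lt_dNumber {X : Type} [PseudoMetricSpace X] [CompleteSpace X]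
    [Nonempty X] {G : Set (Set X)} (hcard : Cardinal.mk G < dNumber)
    (hG : ∀ s ∈ G, IsGδ s) (hdense : Dense (⋂₀ G)) : ¬ IsMeagre (⋂₀ G) := by
  intro hmeagre
  obtain ⟨V, hVo, hVd, hdisj⟩ := hmeagre.exists_disjoint_iInter_isOpen_dense
  obtain ⟨T, hTG, hTV⟩ := exists_nestedBallScheme hdense hVo hVd
  choose U hUo hGU using fun g : G => (hG g g.2).eq_iInter_nat
  have hcenter (g : G) (s : List ℕ) : T.center s ∈ ⋂ k ∈ Iic s.length, U g k :=
    mem_biInter fun k _ => mem_iInter.1 ((hGU g).subset (hTG s g g.2)) k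
  choose J hJ using fun (g : G) (s : List ℕ) => eventually_atTop.mp <|
    eventually_ball_pow_mul_subset (((finite_Iic _).isOpen_biInter fun k _ =>
      hUo g k).mem_nhds (hcenter g s)) (T.radius s)
  choose B hB using fun g : G => exists_bound_of_length_le_forall_le (J g)
  obtain ⟨h, hmono, hid, hesc⟩ := exists_monotone_frequently_lt_succ B hcard
  set f : ℕ → ℕ := fun m => h (m + 1)
  have hJf (g : G) : ∃ᶠ m in atTop, J g (branch f m) < f m := by
    refine (hesc g).mono fun m hm => (hB g _ _ ?_ fun x hx => ?_).trans_lt hm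
    · exact (length_branch f m).trans_le (hid m)
    · obtain ⟨i, hi, rfl⟩ := mem_branch.mp hx
      exact hmono hi
  obtain ⟨x, hx⟩ := T.exists_forall_mem_closedBall_branch f
  have hxG : x ∈ ⋂₀ G := fun g hg => by
    rw [show g = _ from hGU ⟨g, hg⟩, mem_iInter]
    intro n
    obtain ⟨m, hnm, hxm⟩ := frequently_atTop.mp
      (T.frequently_mem_of_frequently_lt hx (hJ ⟨g, hg⟩) (hJf ⟨g, hg⟩)) n
    rw [length_branch] at hxm
    exact mem_iInter₂.1 hxm n hnm
  have hxV : x ∈ ⋂ n, V n := mem_iInter.2 fun n => by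
    simpa only [length_branch] using hTV (f n) (branch f n) (branch_succ f n ▸ hx (n + 1))
  exact disjoint_left.mp hdisj hxG hxV

theorem inter_denseGdelta_nonmeager_general {X : Type} [TopologicalSpace X] [PolishSpace X]
    [Nonempty X]
    (G : Set (Set X)) (hcard : Cardinal.mk G < dNumber)
    (hG : ∀ s ∈ G, Dense s ∧ IsGδ s) (hdense : Dense (⋂₀ G)) :
    ¬ IsMeagre (⋂₀ G) := by
  let _ := TopologicalSpace.upgradeIsCompletelyMetrizable X
  exact not_isMeagre_sInter_of_mk_lt_dNumber hcard (fun s hs => (hG s hs).2) hdense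

theorem inter_denseGdelta_nonmeager {X : Type} [TopologicalSpace X] [PolishSpace X]
    [Nonempty X] (hX : Perfect (Set.univ : Set X))
    (G : Set (Set X)) (hne : G.Nonempty) (hcard : Cardinal.mk G < dNumber)
    (hG : ∀ s ∈ G, Dense s ∧ IsGδ s) (hdense : Dense (⋂₀ G)) :
    ¬ IsMeagre (⋂₀ G) :=
  inter_denseGdelta_nonmeager_general G hcard hG hdense
end

section
/- There exists a maximal independent family on ω that is meager (indeed nowhere dense) as a subset of 2^ω. -/
/-- An independent family on `ω`, where subsets of `ω` are identified with elements of the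
Cantor space `ℕ → Bool`: every finite Boolean combination of (distinct) members is infinite. -/
def IndepFamily (A : Set (ℕ → Bool)) : Prop :=
  ∀ F : Finset (ℕ → Bool), ↑F ⊆ A → F.Nonempty → ∀ ν : (ℕ → Bool) → Bool,
    {m : ℕ | ∀ x ∈ F, x m = ν x}.Infinite

/-
Start from any infinite maximal independent family `B` and replace each `X ∈ B` by
`padOdd X = {2n | n ∈ X} ∪ {odd numbers}`. The resulting family lies in the closed set of points
that are `true` at every odd coordinate, which has empty interior, so it is nowhere dense. It is
still independent, and it is maximal: a member `c = padOdd b` of the new family is false only at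
even numbers, so adding `c` with value `false` to a Boolean combination of an independent
extension `C` shows that `x ↦ {n | 2n ∈ x}` is injective on `C` and maps `C` onto an independent
family containing `B`, hence onto `B`.
-/

open Set

lemma IsChain.indepFamily_sUnion {c : Set (Set (ℕ → Bool))} (hc : IsChain (· ⊆ ·) c)
    (hne : c.Nonempty) (hind : ∀ A ∈ c, IndepFamily A) : IndepFamily (⋃₀ c) := by
  intro F hF hFne ν
  rw [sUnion_eq_biUnion] at hF
  obtain ⟨A, hA, hFA⟩ := hc.directedOn.exists_mem_subset_of_finset_subset_biUnion hne hF
  exact hind A hA F hFA hFne ν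

lemma exists_maximal_indepFamily_superset {A : Set (ℕ → Bool)} (hA : IndepFamily A) :
    ∃ B, A ⊆ B ∧ Maximal IndepFamily B :=
  zorn_subset_nonempty {B | IndepFamily B}
    (fun c hc hchain hne => ⟨⋃₀ c, hchain.indepFamily_sUnion hne hc,
      fun _ => subset_sUnion_of_mem⟩) A hA

section CodesContaining

open Denumerable

/-- `codesContaining n` is the set of codes of the finite subsets of `ω` that contain `n`. -/
def codesContaining (n : ℕ) : ℕ → Bool := fun k => decide (n ∈ (eqv (Finset ℕ)).symm k)

lemma codesContaining_eqv (n : ℕ) (s : Finset ℕ) :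
    codesContaining n (eqv (Finset ℕ) s) = decide (n ∈ s) := by
  simp [codesContaining]

lemma codesContaining_injective : Function.Injective codesContaining := fun n m h => by
  simpa [codesContaining_eqv] using congrFun h (eqv (Finset ℕ) {m})

lemma indepFamily_range_codesContaining : IndepFamily (range codesContaining) := by
  classical
  intro F hF _ ν
  let I : Finset ℕ := F.preimage codesContaining codesContaining_injective.injOn
  let Pos : Finset ℕ := I.filter fun n => ν (codesContaining n)
  have hPosI : Pos ⊆ I := Finset.filter_subset _ _
  have hcode : ∀ t ∉ I, eqv (Finset ℕ) (insert t Pos) ∈ {m | ∀ x ∈ F, x m = ν x} := by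
    intro t ht x hx
    obtain ⟨n, rfl⟩ := hF hx
    have hnI : n ∈ I := Finset.mem_preimage.2 hx
    have hnt : n ≠ t := fun h => ht (h ▸ hnI)
    simp [codesContaining_eqv, Pos, hnI, hnt]
  have hinj : InjOn (fun t => eqv (Finset ℕ) (insert t Pos)) (↑I)ᶜ := by
    intro t ht t' _ h
    have ht_mem : t ∈ insert t' Pos :=
      (eqv (Finset ℕ)).injective h ▸ Finset.mem_insert_self t Pos
    exact (Finset.mem_insert.1 ht_mem).resolve_right fun h => ht (hPosI h)
  exact (I.finite_toSet.infinite_compl.image hinj).mono (image_subset_iff.2 hcode)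

end CodesContaining

section Padding

def evenPart (x : ℕ → Bool) : ℕ → Bool := fun n => x (2 * n)

def padOdd (X : ℕ → Bool) : ℕ → Bool := fun m => if Even m then X (m / 2) else true

def oddTrue : Set (ℕ → Bool) := {z | ∀ n, z (2 * n + 1) = true}

lemma padOdd_two_mul (X : ℕ → Bool) (n : ℕ) : padOdd X (2 * n) = X n := by
  simp [padOdd]

lemma evenPart_padOdd (X : ℕ → Bool) : evenPart (padOdd X) = X :=
  funext (padOdd_two_mul X)

lemma padOdd_injective : Function.Injective padOdd :=
  Function.LeftInverse.injective evenPart_padOdd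

lemma range_padOdd_subset_oddTrue : range padOdd ⊆ oddTrue := by
  rintro _ ⟨X, rfl⟩ n
  simp [padOdd]

lemma even_of_mem_oddTrue {z : ℕ → Bool} (hz : z ∈ oddTrue) {m : ℕ} (h : z m = false) :
    Even m := by
  by_contra hm
  obtain ⟨n, rfl⟩ := Nat.not_even_iff_odd.1 hm
  simp [hz n] at h

lemma IndepFamily.image_padOdd {B : Set (ℕ → Bool)} (hB : IndepFamily B) :
    IndepFamily (padOdd '' B) := by
  classical
  intro F hF hFne ν
  obtain ⟨F', hF'B, rfl⟩ := Finset.subset_set_image_iff.1 hF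
  refine ((hB F' hF'B (Finset.image_nonempty.1 hFne) (ν ∘ padOdd)).image
    (mul_right_injective₀ (two_ne_zero' ℕ)).injOn).mono ?_
  rintro _ ⟨n, hn, rfl⟩ _ hx
  obtain ⟨X, hX, rfl⟩ := Finset.mem_image.1 hx
  simpa [padOdd_two_mul] using hn X hX

variable {C : Set (ℕ → Bool)}

/-- Adding `c` with value `false` confines a Boolean combination to even numbers. -/
lemma IndepFamily.infinite_setOf_forall_even_eq (hC : IndepFamily C) {c : ℕ → Bool}
    (hc : c ∈ C ∩ oddTrue) {F : Finset (ℕ → Bool)} (hFC : ↑F ⊆ C) (hcF : c ∉ F)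
    (ν : (ℕ → Bool) → Bool) : {n | ∀ x ∈ F, x (2 * n) = ν x}.Infinite := by
  classical
  have hS := hC (insert c F) (by simpa [insert_subset_iff] using ⟨hc.1, hFC⟩)
    (Finset.insert_nonempty c F) (Function.update ν c false)
  refine Infinite.of_image (2 * ·) (hS.mono fun m hm => ?_)
  have hm_even := even_of_mem_oddTrue hc.2 (by simpa using hm c (Finset.mem_insert_self c F))
  refine ⟨m / 2, fun x hx => ?_, Nat.two_mul_div_two_of_even hm_even⟩
  have hxc : x ≠ c := fun h => hcF (h ▸ hx)
  simpa [Nat.two_mul_div_two_of_even hm_even, hxc] using hm x (Finset.mem_insert_of_mem hx)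

lemma IndepFamily.injOn_evenPart (hC : IndepFamily C) (hodd : (C ∩ oddTrue).Infinite) :
    InjOn evenPart C := by
  classical
  intro x hx y hy hxy
  by_contra hne
  obtain ⟨c, hc, hcxy⟩ := (hodd.sdiff (toFinite {x, y})).nonempty
  obtain ⟨n, hn⟩ := (hC.infinite_setOf_forall_even_eq hc (F := {x, y})
    (by simpa [insert_subset_iff] using ⟨hx, hy⟩) (by simpa using hcxy)
    fun z => decide (z = x)).nonempty
  have hxn : x (2 * n) = true := by simpa using hn x (by simp)
  have hyn : y (2 * n) = false := by simpa [Ne.symm hne] using hn y (by simp)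
  have : x (2 * n) = y (2 * n) := congrFun hxy n
  simp [hxn, hyn] at this

lemma IndepFamily.image_evenPart (hC : IndepFamily C) (hodd : (C ∩ oddTrue).Infinite) :
    IndepFamily (evenPart '' C) := by
  classical
  intro F hF _ ν
  obtain ⟨F', hF'C, rfl⟩ := Finset.subset_set_image_iff.1 hF
  obtain ⟨c, hc, hcF'⟩ := (hodd.sdiff F'.finite_toSet).nonempty
  refine (hC.infinite_setOf_forall_even_eq hc hF'C hcF' (ν ∘ evenPart)).mono fun n hn X hX => ?_
  obtain ⟨x, hx, rfl⟩ := Finset.mem_image.1 hX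
  exact hn x hx

lemma Maximal.image_padOdd {B : Set (ℕ → Bool)} (hB : Maximal IndepFamily B)
    (hBinf : B.Infinite) : Maximal IndepFamily (padOdd '' B) := by
  refine ⟨hB.1.image_padOdd, fun C hC hBC y hy => ?_⟩
  have hodd : (C ∩ oddTrue).Infinite := (hBinf.image padOdd_injective.injOn).mono
    (subset_inter hBC ((image_subset_range _ _).trans range_padOdd_subset_oddTrue))
  have hCB : evenPart '' C = B := (hB.eq_of_subset (hC.image_evenPart hodd) fun X hX =>
    ⟨padOdd X, hBC ⟨X, hX, rfl⟩, evenPart_padOdd X⟩).symm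
  have hyB : evenPart y ∈ B := hCB ▸ mem_image_of_mem evenPart hy
  exact ⟨evenPart y, hyB,
    hC.injOn_evenPart hodd (hBC ⟨_, hyB, rfl⟩) hy (evenPart_padOdd _)⟩

end Padding

lemma isNowhereDense_setOf_forall_eq {ι α : Type*} [TopologicalSpace α] [T1Space α]
    [Nontrivial α] {S : Set ι} (hS : S.Infinite) (a : α) :
    IsNowhereDense {z : ι → α | ∀ i ∈ S, z i = a} := by
  classical
  have hclosed : IsClosed {z : ι → α | ∀ i ∈ S, z i = a} := by
    have h : {z : ι → α | ∀ i ∈ S, z i = a} = ⋂ i ∈ S, Function.eval i ⁻¹' {a} := by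
      ext; simp
    exact h ▸ isClosed_biInter fun i _ => isClosed_singleton.preimage (continuous_apply i)
  rw [hclosed.isNowhereDense_iff, eq_empty_iff_forall_notMem]
  intro z hz
  obtain ⟨I, u, hu, hIu⟩ := isOpen_pi_iff.1 isOpen_interior z hz
  obtain ⟨i, hiS, hiI⟩ := (hS.sdiff I.finite_toSet).nonempty
  obtain ⟨b, hb⟩ := exists_ne a
  have hmem : Function.update z i b ∈ (I : Set ι).pi u := fun j hj => by
    rw [Function.update_of_ne (ne_of_mem_of_not_mem hj hiI)]
    exact (hu j hj).2
  exact hb (by simpa using interior_subset (hIu hmem) i hiS)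

lemma isNowhereDense_oddTrue : IsNowhereDense oddTrue := by
  simpa [oddTrue] using isNowhereDense_setOf_forall_eq
    (infinite_range_of_injective fun m n (h : 2 * m + 1 = 2 * n + 1) => by omega) true

theorem exists_meager_maximal_independent :
    ∃ A : Set (ℕ → Bool), IndepFamily A ∧
      (∀ B : Set (ℕ → Bool), A ⊆ B → IndepFamily B → B = A) ∧
      IsNowhereDense A ∧ IsMeagre A := by
  obtain ⟨B, hcodesB, hBmax⟩ :=
    exists_maximal_indepFamily_superset indepFamily_range_codesContaining
  have hBinf : B.Infinite := (infinite_range_of_injective codesContaining_injective).mono hcodesB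
  have hAmax := hBmax.image_padOdd hBinf
  have hAnd : IsNowhereDense (padOdd '' B) :=
    isNowhereDense_oddTrue.mono ((image_subset_range _ _).trans range_padOdd_subset_oddTrue)
  exact ⟨padOdd '' B, hAmax.1, fun C hAC hC => hAmax.eq_of_superset hC hAC, hAnd, hAnd.isMeagre⟩
end

section
/- For each 1 ≤ n < ω and ν : n → 2, the relation R_ν = { x ∈ (2^ω)^n : ⋂_{k<n} x(k)^{ν(k)} is finite } is a meager subset of (2^ω)^n, where for z ∈ 2^ω, z^1 denotes {i : z(i) = 1} and z^0 denotes its complement. -/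
/-!
Transposing coordinates turns `x` into a sequence in the discrete space `Fin n → Bool`, and
`x ∈ R_ν` says this sequence visits the point `ν` only finitely often. For every `N`, the
sequences visiting a nonempty open set at some index `≥ N` form a dense open set (change one
far-out coordinate), so visiting it infinitely often is a residual property.
-/

open Set Filter Topology

theorem tendsto_update_atTop_nhds {γ : Type*} [TopologicalSpace γ] (y : ℕ → γ) (u : γ) :
    Tendsto (fun j => Function.update y j u) atTop (𝓝 y) := by
  refine tendsto_pi_nhds.2 fun m => tendsto_nhds_of_eventually_eq ?_
  filter_upwards [eventually_gt_atTop m] with j hj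
  exact Function.update_of_ne hj.ne u y

section FrequentlyMem

variable {γ : Type*} [TopologicalSpace γ] {U : Set γ}

theorem isOpen_setOf_exists_ge_mem (hU : IsOpen U) (N : ℕ) :
    IsOpen {y : ℕ → γ | ∃ m ≥ N, y m ∈ U} := by
  have : {y : ℕ → γ | ∃ m ≥ N, y m ∈ U} = ⋃ m ≥ N, (· m) ⁻¹' U := by ext; simp
  exact this ▸ isOpen_biUnion fun m _ => hU.preimage (continuous_apply m)

theorem dense_setOf_exists_ge_mem (hne : U.Nonempty) (N : ℕ) :
    Dense {y : ℕ → γ | ∃ m ≥ N, y m ∈ U} := by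
  obtain ⟨u, hu⟩ := hne
  refine fun y => mem_closure_of_tendsto (tendsto_update_atTop_nhds y u) ?_
  filter_upwards [eventually_ge_atTop N] with j hj
  exact ⟨j, hj, by simpa using hu⟩

theorem eventually_residual_frequently_mem (hU : IsOpen U) (hne : U.Nonempty) :
    ∀ᶠ y in residual (ℕ → γ), ∃ᶠ m in atTop, y m ∈ U := by
  simp only [frequently_atTop, eventually_countable_forall]
  exact fun N => residual_of_dense_open (isOpen_setOf_exists_ge_mem hU N)
    (dense_setOf_exists_ge_mem hne N)

theorem isMeagre_setOf_finite_mem (hU : IsOpen U) (hne : U.Nonempty) :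
    IsMeagre {y : ℕ → γ | {m | y m ∈ U}.Finite} := by
  rw [IsMeagre]
  filter_upwards [eventually_residual_frequently_mem hU hne] with y hy
  exact Nat.frequently_atTop_iff_infinite.1 hy

end FrequentlyMem

def Homeomorph.piComm {ι κ : Type*} (φ : ι → κ → Type*) [∀ i j, TopologicalSpace (φ i j)] :
    (∀ i j, φ i j) ≃ₜ ∀ j i, φ i j where
  toEquiv := Equiv.piComm φ
  continuous_toFun := by dsimp [Equiv.piComm, Function.swap]; fun_prop
  continuous_invFun := by dsimp [Equiv.piComm, Function.swap]; fun_prop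

theorem Rnu_meager_general (n : ℕ) (ν : Fin n → Bool) :
    IsMeagre {x : Fin n → (ℕ → Bool) | {m : ℕ | ∀ k : Fin n, x k m = ν k}.Finite} := by
  have hseq := isMeagre_setOf_finite_mem (isOpen_discrete {ν}) (singleton_nonempty ν)
  have hx := hseq.preimage_of_isOpenMap
    (Homeomorph.piComm fun (_ : Fin n) (_ : ℕ) => Bool).continuous (Homeomorph.piComm _).isOpenMap
  simpa [Homeomorph.piComm, funext_iff] using hx

theorem Rnu_meager (n : ℕ) (hn : 1 ≤ n) (ν : Fin n → Bool) :
    IsMeagre {x : Fin n → (ℕ → Bool) | {m : ℕ | ∀ k : Fin n, x k m = ν k}.Finite} :=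
  Rnu_meager_general n ν
end

section
/- Let X be a crowded Polish space, 𝓡 a non-empty collection of symmetric meager F_σ relations on X with |𝓡| < 𝔡, and suppose F ⊆ X with |F| < 𝔡 and Q ⊆ F is a countable crowded subset, such that the freeness condition ⊛(F, 𝓡) holds. Then there exists z ∈ cl(Q) ∖ Q such that ⊛(F ∪ {z}, 𝓡) holds; in particular F ∪ {z} is 𝓡-free. -/
/-- A relation `S ⊆ X^m` is symmetric if it is invariant under coordinate permutations. -/
def PermSymmetric {X : Type*} {m : ℕ} (S : Set (Fin m → X)) : Prop :=
  ∀ (π : Equiv.Perm (Fin m)) (x : Fin m → X), x ∈ S → x ∘ π ∈ S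

/-- A set is `F_σ` if it is a countable union of closed sets. -/
def IsFsigma {X : Type*} [TopologicalSpace X] (s : Set X) : Prop :=
  ∃ f : ℕ → Set X, (∀ k, IsClosed (f k)) ∧ s = ⋃ k, f k

/-!
Label the nodes of the `ℕ`-branching tree by distinct points of `Q`, the `c`-th child of a node
lying within about `2⁻¹ ^ c` of it. Every branch `g : ℕ → ℕ` converges to some `z_g ∈ closure Q`,
and the faster `g` grows, the closer `z_g` stays to the nodes on its path. A closed set `C`
meeting `Q` in finitely many points contains only finitely many labels, so if `z_g ∈ C` then,
from some depth on, `g` stays below thresholds read off the distances of the labels to `C`; hence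
`g` is bounded by one of countably many functions attached to `C`. As fewer than `𝔡` functions
cannot bound every function, some `z_g` avoids fewer than `𝔡` such sets at once.

Apply this to the singletons of `Q` and to the complements of the `G_δ` sections
`{w | y ⌢ w ∈ G^{ℓ+1}}` over injective tuples `y` from `F`: by `⊛(F, 𝓡)` such a section contains
`F` except the points of `y`. By symmetry of `G^{ℓ+1}`, the point `z` may always be taken to be
the last coordinate, so `⊛(F ∪ {z}, 𝓡)` follows.
-/

open Filter Set Function Cardinal Topology

lemma exists_dominating_family_mk_eq_dNumber :
    ∃ D : Set (ℕ → ℕ), #D = dNumber ∧ ∀ g : ℕ → ℕ, ∃ f ∈ D, ∀ᶠ m in atTop, g m ≤ f m :=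
  csInf_mem (s := {c | ∃ D : Set (ℕ → ℕ), #D = c ∧ ∀ g : ℕ → ℕ, ∃ f ∈ D, ∀ᶠ m in atTop, g m ≤ f m})
    ⟨_, univ, rfl, fun g => ⟨g, mem_univ g, .of_forall fun _ => le_rfl⟩⟩

lemma aleph0_lt_dNumber : ℵ₀ < dNumber := by
  obtain ⟨D, hD, hdom⟩ := exists_dominating_family_mk_eq_dNumber
  rw [← hD, ← not_le, mk_le_aleph0_iff, countable_coe_iff]
  intro hc
  obtain ⟨f₀, hf₀, -⟩ := hdom 0
  obtain ⟨u, rfl⟩ := hc.exists_eq_range ⟨f₀, hf₀⟩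
  -- `g` escapes every `u k` at every `m ≥ k`
  obtain ⟨_, ⟨k, rfl⟩, hk⟩ := hdom fun m => ∑ i ∈ Finset.range (m + 1), u i m + 1
  obtain ⟨m, hm, hkm⟩ := (hk.and (eventually_ge_atTop k)).exists
  have : u k m ≤ ∑ i ∈ Finset.range (m + 1), u i m :=
    Finset.single_le_sum (f := fun i => u i m) (fun _ _ => Nat.zero_le _)
      (Finset.mem_range.2 (Nat.lt_succ_of_le hkm))
  omega

lemma exists_forall_not_le_of_mk_lt_dNumber {J : Type} (hJ : #J < dNumber) (B : J → ℕ → ℕ) :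
    ∃ g : ℕ → ℕ, ∀ j, ¬ g ≤ B j := by
  by_contra! h
  refine (mk_range_le.trans_lt hJ).not_ge (csInf_le' ⟨range B, rfl, fun g => ?_⟩)
  obtain ⟨j, hj⟩ := h g
  exact ⟨B j, mem_range_self j, .of_forall hj⟩

lemma mk_prod_lt_dNumber {α β : Type} (hα : #α < dNumber) (hβ : #β < dNumber) :
    #(α × β) < dNumber := by
  rw [mk_prod, lift_id, lift_id]
  exact mul_lt_of_lt aleph0_lt_dNumber.le hα hβ

lemma mk_nat_lt_dNumber : #ℕ < dNumber :=
  mk_nat ▸ aleph0_lt_dNumber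

lemma mk_sigma_fin_lt_dNumber {α : Type} (hα : #α < dNumber) : #(Σ ℓ, Fin ℓ → α) < dNumber := by
  rw [← mk_congr List.equivSigmaTuple]
  exact (mk_list_le_max α).trans_lt (max_lt aleph0_lt_dNumber hα)

lemma Nat.pair_le_pair {a a' b b' : ℕ} (ha : a ≤ a') (hb : b ≤ b') :
    Nat.pair a b ≤ Nat.pair a' b' :=
  ((StrictMono.monotone fun _ _ => Nat.pair_lt_pair_left b) ha).trans
    ((StrictMono.monotone fun _ _ => Nat.pair_lt_pair_right a') hb)

/-- Nodes of the `ℕ`-branching tree are coded by naturals: `0` is the root and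
`Nat.pair s c + 1` is the `c`-th child of `s`. `branchCode g k` is the node of depth `k` on the
branch `g`. -/
def branchCode (g : ℕ → ℕ) : ℕ → ℕ
  | 0 => 0
  | k + 1 => Nat.pair (branchCode g k) (g k) + 1

lemma strictMono_branchCode (g : ℕ → ℕ) : StrictMono (branchCode g) :=
  strictMono_nat_of_lt_succ fun _ => Nat.lt_succ_of_le (Nat.left_le_pair _ _)

lemma lt_branchCode_succ (g : ℕ → ℕ) (k : ℕ) : g k < branchCode g (k + 1) :=
  Nat.lt_succ_of_le (Nat.right_le_pair _ _)

lemma branchCode_le_branchCode {g g' : ℕ → ℕ} {k : ℕ} (h : ∀ i < k, g i ≤ g' i) :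
    branchCode g k ≤ branchCode g' k := by
  induction k with
  | zero => exact le_rfl
  | succ k ih =>
    exact Nat.succ_le_succ (Nat.pair_le_pair (ih fun i hi => h i (Nat.lt_succ_of_lt hi))
      (h k (Nat.lt_succ_self k)))

/-- Bounds every branch `g` that is bounded by `v` up to some depth and below `f (branchCode g k)`
beyond it: under the bound `trapBound f v k`, the nodes of depth `k + 1` have codes at most
`branchCode (fun _ => trapBound f v k) (k + 1)`. -/
def trapBound (f : ℕ → ℕ) (v : ℕ) : ℕ → ℕ
  | 0 => v
  | k + 1 => max (trapBound f v k)
      ((Finset.range (branchCode (fun _ => trapBound f v k) (k + 1) + 1)).sup f)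

lemma monotone_trapBound (f : ℕ → ℕ) (v : ℕ) : Monotone (trapBound f v) :=
  monotone_nat_of_le_succ fun _ => le_max_left _ _

lemma le_trapBound {f g : ℕ → ℕ} {N : ℕ} (hg : ∀ k, N < k → g k < f (branchCode g k)) :
    g ≤ trapBound f ((Finset.range (N + 1)).sup g) := by
  set v := (Finset.range (N + 1)).sup g
  have hv : ∀ k ≤ N, g k ≤ trapBound f v k := fun k hk =>
    (Finset.le_sup (f := g) (Finset.mem_range.2 (Nat.lt_succ_of_le hk))).trans
      (monotone_trapBound f v (Nat.zero_le k))
  suffices h : ∀ k, ∀ i ≤ k, g i ≤ trapBound f v k from fun k => h k k le_rfl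
  intro k
  induction k with
  | zero => intro i hi; rw [Nat.le_zero.1 hi]; exact hv 0 (Nat.zero_le _)
  | succ k ih =>
    intro i hi
    rcases Nat.le_succ_iff.1 hi with hik | rfl
    · exact (ih i hik).trans (monotone_trapBound f v (Nat.le_succ k))
    rcases le_or_gt (k + 1) N with hkN | hNk
    · exact hv _ hkN
    have hcode : branchCode g (k + 1) ≤ branchCode (fun _ => trapBound f v k) (k + 1) :=
      branchCode_le_branchCode fun i hi => ih i (Nat.le_of_lt_succ hi)
    calc g (k + 1) ≤ f (branchCode g (k + 1)) := (hg _ hNk).le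
      _ ≤ (Finset.range (branchCode (fun _ => trapBound f v k) (k + 1) + 1)).sup f :=
        Finset.le_sup (Finset.mem_range.2 (Nat.lt_succ_of_le hcode))
      _ ≤ trapBound f v (k + 1) := le_max_right _ _

section TreeLabel

variable {X : Type*} [MetricSpace X] {Q : Set X}

lemma Preperfect.exists_mem_dist_lt_notMem (hQ : Preperfect Q) {x : X} (hx : x ∈ Q) {ε : ℝ}
    (hε : 0 < ε) {A : Set X} (hA : A.Finite) : ∃ y ∈ Q, dist y x < ε ∧ y ∉ A := by
  obtain ⟨y, ⟨hyx, hyQ⟩, hyA⟩ := (Set.Infinite.of_accPt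
    (hQ.open_inter Metric.isOpen_ball x ⟨Metric.mem_ball_self hε, hx⟩)).exists_notMem_finite hA
  exact ⟨y, hyQ, hyx, hyA⟩

noncomputable def treeLabel (hQne : Q.Nonempty) (hQ : Preperfect Q) : ℕ → Q
  | 0 => ⟨hQne.some, hQne.some_mem⟩
  | m + 1 =>
    have h := hQ.exists_mem_dist_lt_notMem (treeLabel hQne hQ (Nat.unpair m).1).2
      (ε := 2⁻¹ ^ (m + 1)) (by positivity)
      (finite_range fun k : Fin (m + 1) => (treeLabel hQne hQ k : X))
    ⟨h.choose, h.choose_spec.1⟩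
decreasing_by
  all_goals first
    | exact Nat.lt_succ_of_le (Nat.unpair_left_le m)
    | exact k.isLt

variable (hQne : Q.Nonempty) (hQ : Preperfect Q)

lemma dist_treeLabel_succ_lt (m : ℕ) :
    dist (treeLabel hQne hQ (m + 1) : X) (treeLabel hQne hQ (Nat.unpair m).1) < 2⁻¹ ^ (m + 1) := by
  rw [treeLabel]
  generalize_proofs h
  exact h.choose_spec.2.1

lemma treeLabel_succ_ne {m k : ℕ} (hk : k ≤ m) :
    (treeLabel hQne hQ (m + 1) : X) ≠ treeLabel hQne hQ k := by
  rw [treeLabel]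
  generalize_proofs h
  exact fun heq => h.choose_spec.2.2 ⟨⟨k, Nat.lt_succ_of_le hk⟩, heq.symm⟩

lemma injective_treeLabel : Injective fun m => (treeLabel hQne hQ m : X) := by
  have hne : ∀ {a b}, a < b → (treeLabel hQne hQ b : X) ≠ treeLabel hQne hQ a := by
    intro a b hab
    obtain ⟨m, rfl⟩ := Nat.exists_eq_add_one_of_ne_zero (Nat.ne_zero_of_lt hab)
    exact treeLabel_succ_ne hQne hQ (Nat.le_of_lt_succ hab)
  intro a b hab
  by_contra h
  rcases Nat.lt_or_gt_of_ne h with h | h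
  · exact hne h hab.symm
  · exact hne h hab

lemma dist_treeLabel_branchCode_succ_lt (g : ℕ → ℕ) (k : ℕ) :
    dist (treeLabel hQne hQ (branchCode g (k + 1)) : X) (treeLabel hQne hQ (branchCode g k)) <
      2⁻¹ ^ branchCode g (k + 1) := by
  have h := dist_treeLabel_succ_lt hQne hQ (Nat.pair (branchCode g k) (g k))
  rw [Nat.unpair_pair] at h
  exact h

lemma exists_tendsto_treeLabel_branchCode [CompleteSpace X] (g : ℕ → ℕ) :
    ∃ z, Tendsto (fun k => (treeLabel hQne hQ (branchCode g k) : X)) atTop (𝓝 z) := by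
  refine cauchySeq_tendsto_of_complete (cauchySeq_of_le_geometric 2⁻¹ 1 (by norm_num) fun k => ?_)
  rw [dist_comm, one_mul]
  exact (dist_treeLabel_branchCode_succ_lt hQne hQ g k).le.trans
    (pow_le_pow_of_le_one (by norm_num) (by norm_num)
      ((Nat.le_succ k).trans ((strictMono_branchCode g).id_le _)))

lemma dist_treeLabel_branchCode_le {g : ℕ → ℕ} {z : X}
    (hz : Tendsto (fun k => (treeLabel hQne hQ (branchCode g k) : X)) atTop (𝓝 z)) (k : ℕ) :
    dist (treeLabel hQne hQ (branchCode g k) : X) z ≤ 2⁻¹ ^ g k := by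
  set C : ℝ := 2⁻¹ ^ branchCode g (k + 1)
  have hstep : ∀ d, dist (treeLabel hQne hQ (branchCode g (d + k)) : X)
      (treeLabel hQne hQ (branchCode g (d + 1 + k))) ≤ C * 2⁻¹ ^ d := by
    intro d
    rw [dist_comm, ← pow_add, add_comm _ d, show d + 1 + k = d + (k + 1) by omega]
    exact (dist_treeLabel_branchCode_succ_lt hQne hQ g _).le.trans
      (pow_le_pow_of_le_one (by norm_num) (by norm_num)
        ((strictMono_branchCode g).add_le_nat d (k + 1)))
  have htail := dist_le_of_le_geometric_of_tendsto₀ 2⁻¹ C (by norm_num) hstep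
    ((tendsto_add_atTop_iff_nat k).2 hz)
  have hC : C ≤ 2⁻¹ ^ (g k + 1) :=
    pow_le_pow_of_le_one (by norm_num) (by norm_num) (lt_branchCode_succ g k)
  rw [zero_add] at htail
  calc _ ≤ C / (1 - 2⁻¹) := htail
    _ ≤ 2⁻¹ ^ (g k + 1) / (1 - 2⁻¹) := by gcongr
    _ = 2⁻¹ ^ g k := by rw [pow_succ]; ring

end TreeLabel

section Avoidance

variable {X : Type*}

theorem exists_mem_closure_forall_notMem_of_isClosed [MetricSpace X] [CompleteSpace X]
    {Q : Set X} (hQne : Q.Nonempty) (hQ : Preperfect Q) {J : Type} (hJ : #J < dNumber)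
    {C : J → Set X} (hC : ∀ j, IsClosed (C j)) (hCQ : ∀ j, (C j ∩ Q).Finite) :
    ∃ z ∈ closure Q, ∀ j, z ∉ C j := by
  set u : ℕ → X := fun m => treeLabel hQne hQ m
  have hthreshold : ∀ j m, ∃ M : ℕ, u m ∉ C j → ∀ y, dist (u m) y ≤ 2⁻¹ ^ M → y ∉ C j := by
    intro j m
    by_cases hm : u m ∈ C j
    · exact ⟨0, fun h => absurd hm h⟩
    obtain ⟨ε, hε, hball⟩ := Metric.isOpen_iff.1 (hC j).isOpen_compl _ hm
    obtain ⟨M, hM⟩ := exists_pow_lt_of_lt_one hε (by norm_num : (2⁻¹ : ℝ) < 1)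
    exact ⟨M, fun _ y hy => hball (by rw [Metric.mem_ball, dist_comm]; linarith)⟩
  choose threshold hthreshold using hthreshold
  have hfinite : ∀ j, ∃ N, ∀ m, u m ∈ C j → m ≤ N := fun j =>
    ((hCQ j).preimage (injective_treeLabel hQne hQ).injOn).bddAbove.imp
      fun N hN m hm => hN ⟨hm, (treeLabel hQne hQ m).2⟩
  choose N hN using hfinite
  obtain ⟨g, hg⟩ := exists_forall_not_le_of_mk_lt_dNumber (mk_prod_lt_dNumber hJ mk_nat_lt_dNumber)
    fun p : J × ℕ => trapBound (threshold p.1) p.2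
  obtain ⟨z, hz⟩ := exists_tendsto_treeLabel_branchCode hQne hQ g
  -- if `z ∈ C j`, then beyond depth `N j` the branch `g` stays below `threshold j`
  refine ⟨z, mem_closure_of_tendsto hz (.of_forall fun k => (treeLabel hQne hQ _).2), fun j hzC =>
    hg (j, _) (le_trapBound (N := N j) fun k hk => ?_)⟩
  have hout : u (branchCode g k) ∉ C j := fun h =>
    (hk.trans_le ((strictMono_branchCode g).id_le k)).not_ge (hN j _ h)
  by_contra! hge
  exact hthreshold j _ hout z ((dist_treeLabel_branchCode_le hQne hQ hz k).trans
    (pow_le_pow_of_le_one (by norm_num) (by norm_num) hge)) hzC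

theorem exists_mem_closure_forall_mem_of_isGδ [TopologicalSpace X]
    [TopologicalSpace.IsCompletelyMetrizableSpace X] {Q : Set X} (hQne : Q.Nonempty)
    (hQ : Preperfect Q) {J : Type} (hJ : #J < dNumber) {S : J → Set X} (hS : ∀ j, IsGδ (S j))
    (hSQ : ∀ j, (Q \ S j).Finite) : ∃ z ∈ closure Q, ∀ j, z ∈ S j := by
  let _ := TopologicalSpace.upgradeIsCompletelyMetrizable X
  choose U hUo hU using fun j => (hS j).eq_iInter_nat
  obtain ⟨z, hzQ, hz⟩ := exists_mem_closure_forall_notMem_of_isClosed hQne hQ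
    (mk_prod_lt_dNumber hJ mk_nat_lt_dNumber) (C := fun p => (U p.1 p.2)ᶜ)
    (fun p => (hUo _ _).isClosed_compl) fun p => (hSQ p.1).subset fun x ⟨hxU, hxQ⟩ =>
      ⟨hxQ, fun hxS => hxU (by rw [hU] at hxS; exact mem_iInter.1 hxS p.2)⟩
  exact ⟨z, hzQ, fun j => (hU j).symm ▸ mem_iInter.2 fun k => not_not.1 (hz (j, k))⟩

end Avoidance

section Sections

variable {X : Type*} {ℓ : ℕ}

lemma isGδ_setOf_snoc_mem [TopologicalSpace X] {G : Set (Fin (ℓ + 1) → X)}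
    (hG : IsGδ G) (y : Fin ℓ → X) : IsGδ {w | Fin.snoc y w ∈ G} :=
  hG.preimage (continuous_const.finSnoc continuous_id)

lemma finite_diff_setOf_snoc_mem {G : Set (Fin (ℓ + 1) → X)} {F : Set X}
    (hF : ∀ x : Fin (ℓ + 1) → X, Injective x → (∀ k, x k ∈ F) → x ∈ G) {y : Fin ℓ → X}
    (hy : Injective y) (hyF : ∀ k, y k ∈ F) : (F \ {w | Fin.snoc y w ∈ G}).Finite :=
  (finite_range y).subset fun w ⟨hwF, hwG⟩ => by_contra fun hwy =>
    hwG (hF _ (Fin.snoc_injective_iff.2 ⟨hy, hwy⟩)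
      (Fin.forall_fin_succ'.2 ⟨by simpa using hyF, by simpa using hwF⟩))

lemma PermSymmetric.mem_of_forall_snoc_mem {G : Set (Fin (ℓ + 1) → X)}
    (hG : PermSymmetric G) {F : Set X} {z : X}
    (hF : ∀ x : Fin (ℓ + 1) → X, Injective x → (∀ k, x k ∈ F) → x ∈ G)
    (hz : ∀ y : Fin ℓ → X, Injective y → (∀ k, y k ∈ F) → Fin.snoc y z ∈ G)
    {x : Fin (ℓ + 1) → X} (hx : Injective x) (hxF : ∀ k, x k ∈ F ∪ {z}) : x ∈ G := by
  by_cases hall : ∀ k, x k ∈ F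
  · exact hF x hx hall
  obtain ⟨k₀, hk₀⟩ := not_forall.1 hall
  have hxk₀ : x k₀ = z := (hxF k₀).resolve_left hk₀
  -- move the coordinate `z` to the end, where `hz` applies, and use the symmetry of `G`
  set σ := Equiv.swap k₀ (Fin.last ℓ) with hσ
  have hlast : (x ∘ σ) (Fin.last ℓ) = z := by simp [hσ, hxk₀]
  have hinit : ∀ i, Fin.init (x ∘ σ) i ∈ F := fun i =>
    (hxF _).resolve_right fun h => (Fin.castSucc_lt_last i).ne <| by
      simpa [hσ] using congrArg σ (hx (h.trans hxk₀.symm))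
  have hmem := hz (Fin.init (x ∘ σ)) ((hx.comp σ.injective).comp (Fin.castSucc_injective ℓ)) hinit
  rw [← hlast, Fin.snoc_init_self] at hmem
  simpa [Function.comp_def, hσ] using hG σ _ hmem

end Sections

theorem key_extension_lemma_general {X : Type} [TopologicalSpace X] [PolishSpace X]
    -- A non-empty collection of symmetric meager `F_σ` relations `R i ⊆ X^{n i + 1}`,
    -- of size `< 𝔡`:
    {ι : Type} (hι : Cardinal.mk ι < dNumber)
    (n : ι → ℕ) (R : ∀ i, Set (Fin (n i + 1) → X))
    -- The fixed system of sets `G^{ℓ+1}_{R i}` for `0 ≤ ℓ ≤ n i`: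
    (G : ∀ i, ∀ ℓ : ℕ, ℓ ≤ n i → Set (Fin (ℓ + 1) → X))
    (hGtop : ∀ i, G i (n i) le_rfl = (R i)ᶜ)
    (hGsym : ∀ i ℓ (h : ℓ ≤ n i), PermSymmetric (G i ℓ h))
    (hGdense : ∀ i ℓ (h : ℓ ≤ n i), Dense (G i ℓ h) ∧ IsGδ (G i ℓ h))
    -- `F` of size `< 𝔡`, `Q ⊆ F` countable and crowded, satisfying `⊛(F, 𝓡)`:
    (F : Set X) (hFcard : Cardinal.mk F < dNumber)
    (Q : Set X) (hQF : Q ⊆ F)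
    (hQcrowded : Q.Nonempty ∧ Preperfect Q)
    (hstar : ∀ i ℓ (h : ℓ ≤ n i), ∀ x : Fin (ℓ + 1) → X,
      Function.Injective x → (∀ k, x k ∈ F) → x ∈ G i ℓ h) :
    ∃ z ∈ closure Q \ Q,
      (∀ i ℓ (h : ℓ ≤ n i), ∀ x : Fin (ℓ + 1) → X,
        Function.Injective x → (∀ k, x k ∈ F ∪ {z}) → x ∈ G i ℓ h) ∧
      ∀ i (x : Fin (n i + 1) → X), Function.Injective x →
        (∀ k, x k ∈ F ∪ {z}) → x ∉ R i := by
  let J := Q ⊕ {t : ι × (Σ ℓ, Fin ℓ → F) // t.2.1 ≤ n t.1 ∧ Injective (Subtype.val ∘ t.2.2)}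
  -- `z` must avoid `Q` and lie in the section of `G` over every injective tuple from `F`
  let S : J → Set X := Sum.elim (fun q => {(q : X)}ᶜ)
    fun ⟨⟨i, ℓ, y⟩, h, _⟩ => {w | Fin.snoc (Subtype.val ∘ y) w ∈ G i ℓ h}
  have hcard : #J < dNumber := by
    rw [mk_sum, lift_id, lift_id]
    exact add_lt_of_lt aleph0_lt_dNumber.le ((mk_le_mk_of_subset hQF).trans_lt hFcard)
      ((mk_subtype_le _).trans_lt (mk_prod_lt_dNumber hι (mk_sigma_fin_lt_dNumber hFcard)))
  have hSGδ : ∀ j, IsGδ (S j) := by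
    rintro (q | ⟨⟨i, ℓ, y⟩, h, -⟩)
    exacts [isOpen_compl_singleton.isGδ, isGδ_setOf_snoc_mem (hGdense i ℓ h).2 _]
  have hSQ : ∀ j, (Q \ S j).Finite := by
    rintro (q | ⟨⟨i, ℓ, y⟩, h, hy⟩)
    · exact (finite_singleton (q : X)).subset fun w hw => not_not.1 hw.2
    · exact (finite_diff_setOf_snoc_mem (hstar i ℓ h) hy fun k => (y k).2).subset
        (sdiff_subset_sdiff_left hQF)
  obtain ⟨z, hzQ, hzS⟩ :=
    exists_mem_closure_forall_mem_of_isGδ hQcrowded.1 hQcrowded.2 hcard hSGδ hSQ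
  have hstar' : ∀ i ℓ (h : ℓ ≤ n i), ∀ x : Fin (ℓ + 1) → X,
      Injective x → (∀ k, x k ∈ F ∪ {z}) → x ∈ G i ℓ h := fun i ℓ h _ =>
    (hGsym i ℓ h).mem_of_forall_snoc_mem (hstar i ℓ h)
      fun y hy hyF => hzS (.inr ⟨(i, ⟨ℓ, fun k => ⟨y k, hyF k⟩⟩), h, hy⟩)
  refine ⟨z, ⟨hzQ, fun hz => hzS (.inl ⟨z, hz⟩) rfl⟩, hstar', fun i x hx hxF => ?_⟩
  simpa [hGtop] using hstar' i (n i) le_rfl x hx hxF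

theorem key_extension_lemma {X : Type} [TopologicalSpace X] [PolishSpace X] [Nonempty X]
    (hX : Perfect (Set.univ : Set X))
    -- A non-empty collection of symmetric meager `F_σ` relations `R i ⊆ X^{n i + 1}`,
    -- of size `< 𝔡`:
    {ι : Type} [Nonempty ι] (hι : Cardinal.mk ι < dNumber)
    (n : ι → ℕ) (R : ∀ i, Set (Fin (n i + 1) → X))
    (hsym : ∀ i, PermSymmetric (R i)) (hmeager : ∀ i, IsMeagre (R i))
    (hFsigma : ∀ i, IsFsigma (R i))
    -- The fixed system of sets `G^{ℓ+1}_{R i}` for `0 ≤ ℓ ≤ n i`: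
    (G : ∀ i, ∀ ℓ : ℕ, ℓ ≤ n i → Set (Fin (ℓ + 1) → X))
    (hGtop : ∀ i, G i (n i) le_rfl = (R i)ᶜ)
    (hGsym : ∀ i ℓ (h : ℓ ≤ n i), PermSymmetric (G i ℓ h))
    (hGdense : ∀ i ℓ (h : ℓ ≤ n i), Dense (G i ℓ h) ∧ IsGδ (G i ℓ h))
    (hGsec : ∀ i ℓ (h : ℓ < n i), ∀ x ∈ G i ℓ h.le,
      Dense {z : X | Fin.snoc x z ∈ G i (ℓ + 1) h} ∧
        IsGδ {z : X | Fin.snoc x z ∈ G i (ℓ + 1) h})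
    -- `F` of size `< 𝔡`, `Q ⊆ F` countable and crowded, satisfying `⊛(F, 𝓡)`:
    (F : Set X) (hFcard : Cardinal.mk F < dNumber)
    (Q : Set X) (hQF : Q ⊆ F) (hQcount : Q.Countable)
    (hQcrowded : Q.Nonempty ∧ Preperfect Q)
    (hstar : ∀ i ℓ (h : ℓ ≤ n i), ∀ x : Fin (ℓ + 1) → X,
      Function.Injective x → (∀ k, x k ∈ F) → x ∈ G i ℓ h) :
    ∃ z ∈ closure Q \ Q,
      (∀ i ℓ (h : ℓ ≤ n i), ∀ x : Fin (ℓ + 1) → X,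
        Function.Injective x → (∀ k, x k ∈ F ∪ {z}) → x ∈ G i ℓ h) ∧
      ∀ i (x : Fin (n i + 1) → X), Function.Injective x →
        (∀ k, x k ∈ F ∪ {z}) → x ∉ R i :=
  key_extension_lemma_general hι n R G hGtop hGsym hGdense F hFcard Q hQF hQcrowded hstar
end

section
/- The cardinal 𝔦(meager), defined as the least cardinality of a non-meager independent family on ω, satisfies non(meager) ≤ 𝔦(meager) ≤ cof(meager). -/
/-- The uniformity `non(meager)` of the meager ideal on `2^ω`. -/
noncomputable def nonMeager : Cardinal :=
  sInf { c | ∃ S : Set (ℕ → Bool), Cardinal.mk S = c ∧ ¬ IsMeagre S }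

/-- The cofinality `cof(meager)` of the meager ideal on `2^ω`. -/
noncomputable def cofMeager : Cardinal :=
  sInf { c | ∃ M : Set (Set (ℕ → Bool)), Cardinal.mk M = c ∧ (∀ s ∈ M, IsMeagre s) ∧
    ∀ N : Set (ℕ → Bool), IsMeagre N → ∃ s ∈ M, N ⊆ s }

/-- `𝔦(meager)`: the least cardinality of a non-meager independent family. -/
noncomputable def iMeager : Cardinal :=
  sInf { c | ∃ A : Set (ℕ → Bool), Cardinal.mk A = c ∧ IndepFamily A ∧ ¬ IsMeagre A }

/-!
Both inequalities follow from a non-meager independent family of size at most `cof(meager)`.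
If every member `x` of a family follows, on a set of blocks lying in a fixed non-principal
ultrafilter, the pattern of a real `r x` with `r` injective, the family is independent: for large
`n` the restrictions `r x ↾ n` of finitely many members are distinct, so a single Boolean function
of `n` bits takes any prescribed values on them. Index a cofinal family of meager sets `M_α`
(at most `𝔠` many) injectively by reals `r_α`; a Baire category argument yields `x_α ∉ M_α`
following the pattern of `r_α`, and then `{x_α}` is contained in no `M_α`, so it is not meager.
-/

open Set Filter Function Cardinal

/- A generic `z` is sent outside `N` by both splicing maps; the ultrafilter decides which of the
two agrees with `t` on a set in `U`. -/
theorem exists_notMem_eventually_eq {ι : Type*} {B : ι → Type*} [∀ i, TopologicalSpace (B i)]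
    [∀ i, DiscreteTopology (B i)] [∀ i, Finite (B i)] (U : Ultrafilter ι) {N : Set (∀ i, B i)}
    (hN : IsMeagre N) (t : ∀ i, B i) : ∃ x ∉ N, ∀ᶠ i in U, x i = t i := by
  let splice (b : Bool) : (∀ i, Bool × B i) → ∀ i, B i :=
    Pi.map fun i p => if p.1 = b then t i else p.2
  have hsplice (b : Bool) : IsMeagre (splice b ⁻¹' N) :=
    hN.preimage_of_isOpenMap (.piMap fun _ => continuous_of_discreteTopology)
      (.piMap (fun _ _ _ => isOpen_discrete _)
        (.of_forall fun _ y => ⟨(!b, y), by simp⟩))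
  have : Nonempty (∀ i, Bool × B i) := ⟨fun i => (true, t i)⟩
  obtain ⟨z, hz⟩ := (dense_of_mem_residual ((hsplice true).union (hsplice false))).nonempty
  obtain ⟨b, hb⟩ : ∃ b, ∀ᶠ i in U, (z i).1 = b := by
    by_cases h : ∀ᶠ i in U, (z i).1 = true
    · exact ⟨true, h⟩
    · exact ⟨false, (Ultrafilter.eventually_not.mpr h).mono fun i => by simp⟩
  refine ⟨splice b z, fun hN => hz ?_, hb.mono fun i hi => by simp [splice, hi]⟩
  cases b
  · exact Or.inr hN
  · exact Or.inl hN

/- `ω` is split into finite blocks, the `n`-th indexed by the Boolean functions `φ` of `n` bits;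
`pattern r` writes `φ (r ↾ n)` at position `φ` of block `n`. -/
noncomputable def blockEquiv : ℕ ≃ Σ n, ((Fin n → Bool) → Bool) :=
  Classical.choice nonempty_equiv_of_countable

noncomputable def blocks : (ℕ → Bool) ≃ₜ ∀ n, ((Fin n → Bool) → Bool) → Bool where
  toFun x n φ := x (blockEquiv.symm ⟨n, φ⟩)
  invFun y m := y (blockEquiv m).1 (blockEquiv m).2
  left_inv x := by funext m; simp
  right_inv y := by funext n φ; dsimp only; rw [Equiv.apply_symm_apply]
  continuous_toFun := continuous_pi fun _ => continuous_pi fun _ => continuous_apply _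
  continuous_invFun := continuous_pi fun _ => (continuous_apply _).comp (continuous_apply _)

def pattern (r : ℕ → Bool) (n : ℕ) (φ : (Fin n → Bool) → Bool) : Bool := φ fun k => r k

theorem eventually_injOn_restrict {ι α : Type*} {r : ι → ℕ → α} {s : Set ι} (hs : s.Finite)
    (hr : InjOn r s) : ∀ᶠ n in atTop, InjOn (fun i (k : Fin n) => r i k) s := by
  have hpair : ∀ p ∈ s ×ˢ s, ∀ᶠ n in atTop,
      p.1 ≠ p.2 → (fun k : Fin n => r p.1 k) ≠ fun k : Fin n => r p.2 k := by
    rintro ⟨i, j⟩ ⟨hi, hj⟩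
    by_cases hij : i = j
    · simp [hij]
    obtain ⟨k, hk⟩ := Function.ne_iff.mp (hr.ne hi hj hij)
    filter_upwards [eventually_gt_atTop k] with n hn _ h
    exact hk (congrFun h ⟨k, hn⟩)
  filter_upwards [(eventually_all_finite (hs.prod hs)).mpr hpair] with n hn i hi j hj hij
  by_contra h
  exact hn (i, j) ⟨hi, hj⟩ h hij

theorem exists_mem_block_forall_apply_eq {ι : Type*} (x r : ι → ℕ → Bool) {s : Set ι} {n : ℕ}
    (hinj : InjOn (fun i (k : Fin n) => r i k) s) (hx : ∀ i ∈ s, blocks (x i) n = pattern (r i) n)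
    (v : ι → Bool) : ∃ m, (blockEquiv m).1 = n ∧ ∀ i ∈ s, x i m = v i := by
  classical
  let φ (u : Fin n → Bool) : Bool := decide (∃ i ∈ s, (fun k : Fin n => r i k) = u ∧ v i)
  refine ⟨blockEquiv.symm ⟨n, φ⟩, by simp, fun j hj => ?_⟩
  change blocks (x j) n φ = v j
  rw [hx j hj, pattern]
  have hφ : (∃ i ∈ s, (fun k : Fin n => r i k) = (fun k : Fin n => r j k) ∧ v i) ↔ v j :=
    ⟨fun ⟨i, hi, hij, hv⟩ => hinj hi hj hij ▸ hv, fun hv => ⟨j, hj, rfl, hv⟩⟩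
  simp only [φ, hφ, Bool.decide_eq_true]

theorem indepFamily_range_of_eventually_blocks_eq_pattern {ι : Type*} (U : Filter ℕ) [U.NeBot]
    (hU : U ≤ cofinite) (x : ι → ℕ → Bool) {r : ι → ℕ → Bool} (hr : Injective r)
    (hx : ∀ i, ∀ᶠ n in U, blocks (x i) n = pattern (r i) n) : IndepFamily (range x) := by
  classical
  intro F hF _ ν
  obtain ⟨G, -, rfl⟩ := Finset.subset_set_image_iff.mp (by rwa [← image_univ] at hF)
  have hgood : ∀ᶠ n in U, ∃ m, (blockEquiv m).1 = n ∧ ∀ i ∈ G, x i m = ν (x i) := by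
    filter_upwards [(eventually_injOn_restrict G.finite_toSet hr.injOn).filter_mono
      (hU.trans_eq Nat.cofinite_eq_atTop), (eventually_all_finset G).mpr fun i _ => hx i]
      with n hinj hxn
    exact exists_mem_block_forall_apply_eq x r hinj hxn _
  refine Set.Infinite.of_image (fun m => (blockEquiv m).1) ?_
  refine (frequently_cofinite_iff_infinite.mp (hgood.frequently.filter_mono hU)).mono ?_
  rintro n ⟨m, rfl, hm⟩
  exact ⟨m, by simpa using hm, rfl⟩

theorem exists_isMeagre_measurableSet_superset {X : Type*} [TopologicalSpace X] [BaireSpace X]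
    [MeasurableSpace X] [OpensMeasurableSpace X] {N : Set X} (hN : IsMeagre N) :
    ∃ s, MeasurableSet s ∧ IsMeagre s ∧ N ⊆ s := by
  obtain ⟨t, htN, htG, htd⟩ := mem_residual.mp hN
  refine ⟨tᶜ, htG.measurableSet.compl, ?_, subset_compl_comm.mp htN⟩
  simpa [IsMeagre] using residual_of_dense_Gδ htG htd

theorem cofMeager_le_continuum : cofMeager ≤ 𝔠 := by
  obtain ⟨b, hbc, -, hb⟩ := TopologicalSpace.exists_countable_basis (ℕ → Bool)
  have hborel : #{s : Set (ℕ → Bool) | MeasurableSet s} ≤ 𝔠 := by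
    rw [BorelSpace.measurable_eq (α := ℕ → Bool), hb.borel_eq_generateFrom]
    exact MeasurableSpace.cardinal_measurableSet_le_continuum
      (hbc.le_aleph0.trans aleph0_le_continuum)
  let M := {s : Set (ℕ → Bool) | MeasurableSet s ∧ IsMeagre s}
  calc cofMeager ≤ #M := csInf_le' ⟨M, rfl, fun s hs => hs.2, fun N hN => by
          obtain ⟨s, hs, hsm, hNs⟩ := exists_isMeagre_measurableSet_superset hN
          exact ⟨s, ⟨hs, hsm⟩, hNs⟩⟩
    _ ≤ #{s : Set (ℕ → Bool) | MeasurableSet s} := mk_le_mk_of_subset fun _ hs => hs.1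
    _ ≤ 𝔠 := hborel

theorem exists_indepFamily_not_isMeagre_mk_le {M : Set (Set (ℕ → Bool))}
    (hM : ∀ s ∈ M, IsMeagre s) (hcof : ∀ N, IsMeagre N → ∃ s ∈ M, N ⊆ s) (hcard : #M ≤ 𝔠) :
    ∃ A, IndepFamily A ∧ ¬ IsMeagre A ∧ #A ≤ #M := by
  obtain ⟨r⟩ : Nonempty (M ↪ (ℕ → Bool)) := by
    rw [← Cardinal.le_def]
    simpa using hcard
  have hx (s : M) : ∃ x ∉ (s : Set (ℕ → Bool)),
      ∀ᶠ n in hyperfilter ℕ, blocks x n = pattern (r s) n := by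
    obtain ⟨y, hy, hyr⟩ := exists_notMem_eventually_eq (hyperfilter ℕ)
      ((hM s s.2).preimage_of_isOpenMap blocks.symm.continuous blocks.symm.isOpenMap)
      (pattern (r s))
    exact ⟨blocks.symm y, hy, by simpa using hyr⟩
  choose x hxs hx using hx
  refine ⟨range x, indepFamily_range_of_eventually_blocks_eq_pattern _ hyperfilter_le_cofinite x
    r.injective hx, fun hA => ?_, mk_range_le⟩
  obtain ⟨s, hs, hAs⟩ := hcof _ hA
  exact hxs ⟨s, hs⟩ (hAs (mem_range_self _))

theorem nonMeager_le_iMeager_le_cofMeager :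
    nonMeager ≤ iMeager ∧ iMeager ≤ cofMeager := by
  obtain ⟨M, hMcard, hM, hcof⟩ : cofMeager ∈ {c | ∃ M : Set (Set (ℕ → Bool)), #M = c ∧
      (∀ s ∈ M, IsMeagre s) ∧ ∀ N : Set (ℕ → Bool), IsMeagre N → ∃ s ∈ M, N ⊆ s} :=
    csInf_mem ⟨_, {s | IsMeagre s}, rfl, fun _ hs => hs, fun N hN => ⟨N, hN, subset_rfl⟩⟩
  obtain ⟨A, hA, hAm, hAcard⟩ :=
    exists_indepFamily_not_isMeagre_mk_le hM hcof (hMcard ▸ cofMeager_le_continuum)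
  obtain ⟨B, hBcard, -, hBm⟩ : iMeager ∈ {c | ∃ A : Set (ℕ → Bool), #A = c ∧ IndepFamily A ∧
      ¬ IsMeagre A} := csInf_mem ⟨_, A, rfl, hA, hAm⟩
  refine ⟨csInf_le' ?_, (csInf_le' ?_).trans (hAcard.trans_eq hMcard)⟩
  exacts [⟨B, hBcard, hBm⟩, ⟨A, rfl, hA, hAm⟩]
end
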